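/- arXiv:2506.10854 — 4 statements merged into one kernel-verified Lean document; each statement's English description precedes it below -/
import Mathlib

section
/- For any finite DAG G with no isolated nodes and any fast-memory capacity r ≥ Δ_in + 1 (where Δ_in is the maximum in-degree of G), the optimal I/O cost in the partial-computing red-blue pebble game is at most the optimal I/O cost in the standard red-blue pebble game: OPT_PRBP(G, r) ≤ OPT_RBP(G, r). In particular, every valid RBP pebbling of cost C induces a valid PRBP pebbling of cost at most C. -/
open scoped Classical

/-! ### Directed graphs / DAGs -/

structure DirGraph (V : Type) where
  E : V → V → Prop

namespace DirGraph

variable {V : Type}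

def Acyclic (G : DirGraph V) : Prop := ∀ v, ¬ Relation.TransGen G.E v v

def IsSource (G : DirGraph V) (v : V) : Prop := ∀ u, ¬ G.E u v

def IsSink (G : DirGraph V) (v : V) : Prop := ∀ u, ¬ G.E v u

def NoIsolated (G : DirGraph V) : Prop := ∀ v, (∃ u, G.E u v) ∨ (∃ u, G.E v u)

noncomputable def inDeg (G : DirGraph V) (v : V) : ℕ := {u | G.E u v}.ncard

noncomputable def outDeg (G : DirGraph V) (v : V) : ℕ := {u | G.E v u}.ncard

noncomputable def maxInDeg (G : DirGraph V) [Fintype V] : ℕ :=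
  Finset.univ.sup G.inDeg

noncomputable def maxOutDeg (G : DirGraph V) [Fintype V] : ℕ :=
  Finset.univ.sup G.outDeg

end DirGraph

/-! ### The (one-shot) red-blue pebble game (RBP) -/

structure RBPState (V : Type) where
  red : Finset V
  blue : Finset V
  computed : Finset V

inductive RBPMove (V : Type) where
  | save : V → RBPMove V
  | load : V → RBPMove V
  | compute : V → RBPMove V
  | delete : V → RBPMove V

def RBPMove.ioCost {V : Type} : RBPMove V → ℕ
  | .save _ => 1
  | .load _ => 1
  | _ => 0

variable {V : Type} [Fintype V] [DecidableEq V]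

def RBPStep (G : DirGraph V) (r : ℕ) (s : RBPState V) :
    RBPMove V → RBPState V → Prop
  | .save v, t => v ∈ s.red ∧ t = { s with blue := insert v s.blue }
  | .load v, t => v ∈ s.blue ∧ (insert v s.red).card ≤ r ∧
      t = { s with red := insert v s.red }
  | .compute v, t => ¬ G.IsSource v ∧ v ∉ s.computed ∧
      (∀ u, G.E u v → u ∈ s.red) ∧ (insert v s.red).card ≤ r ∧
      t = { s with red := insert v s.red, computed := insert v s.computed }
  | .delete v, t => v ∈ s.red ∧ t = { s with red := s.red.erase v }

inductive RBPReaches (G : DirGraph V) (r : ℕ) :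
    RBPState V → List (RBPMove V) → RBPState V → Prop
  | nil (s : RBPState V) : RBPReaches G r s [] s
  | cons {s t u : RBPState V} {m : RBPMove V} {L : List (RBPMove V)} :
      RBPStep G r s m t → RBPReaches G r t L u → RBPReaches G r s (m :: L) u

noncomputable def RBPInit (G : DirGraph V) : RBPState V :=
  ⟨∅, Finset.univ.filter (fun v => G.IsSource v), ∅⟩

def RBPValid (G : DirGraph V) (r : ℕ) (L : List (RBPMove V)) : Prop :=
  ∃ t, RBPReaches G r (RBPInit G) L t ∧ ∀ v, G.IsSink v → v ∈ t.blue

def RBPCost {V : Type} (L : List (RBPMove V)) : ℕ := (L.map RBPMove.ioCost).sum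

noncomputable def optRBP (G : DirGraph V) (r : ℕ) : ℕ∞ :=
  sInf ((fun L => (RBPCost L : ℕ∞)) '' {L | RBPValid G r L})

/-! ### The partial-computing red-blue pebble game (PRBP) -/

structure PRBPState (V : Type) where
  lred : Finset V
  dred : Finset V
  blue : Finset V
  marked : Finset (V × V)

def PRBPState.red (s : PRBPState V) : Finset V := s.lred ∪ s.dred

inductive PRBPMove (V : Type) where
  | save : V → PRBPMove V
  | load : V → PRBPMove V
  | pcompute : V → V → PRBPMove V
  | delete : V → PRBPMove V

def PRBPMove.ioCost {V : Type} : PRBPMove V → ℕ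
  | .save _ => 1
  | .load _ => 1
  | _ => 0

def PRBPStep (G : DirGraph V) (r : ℕ) (s : PRBPState V) :
    PRBPMove V → PRBPState V → Prop
  | .save v, t => v ∈ s.dred ∧
      t = { s with lred := insert v s.lred, dred := s.dred.erase v,
                   blue := insert v s.blue }
  | .load v, t => v ∈ s.blue ∧ ((insert v s.lred) ∪ s.dred).card ≤ r ∧
      t = { s with lred := insert v s.lred }
  | .pcompute u v, t => G.E u v ∧ (u, v) ∉ s.marked ∧
      (∀ w, G.E w u → (w, u) ∈ s.marked) ∧ u ∈ s.red ∧
      (v ∈ s.red ∨ (v ∉ s.red ∧ v ∉ s.blue)) ∧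
      ((s.lred.erase v) ∪ (insert v s.dred)).card ≤ r ∧
      t = { s with lred := s.lred.erase v, dred := insert v s.dred,
                   blue := s.blue.erase v, marked := insert (u, v) s.marked }
  | .delete v, t =>
      (v ∈ s.lred ∧ t = { s with lred := s.lred.erase v }) ∨
      (v ∈ s.dred ∧ (∀ w, G.E v w → (v, w) ∈ s.marked) ∧
        t = { s with dred := s.dred.erase v })

inductive PRBPReaches (G : DirGraph V) (r : ℕ) :
    PRBPState V → List (PRBPMove V) → PRBPState V → Prop
  | nil (s : PRBPState V) : PRBPReaches G r s [] s
  | cons {s t u : PRBPState V} {m : PRBPMove V} {L : List (PRBPMove V)} :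
      PRBPStep G r s m t → PRBPReaches G r t L u → PRBPReaches G r s (m :: L) u

noncomputable def PRBPInit (G : DirGraph V) : PRBPState V :=
  ⟨∅, ∅, Finset.univ.filter (fun v => G.IsSource v), ∅⟩

def PRBPValid (G : DirGraph V) (r : ℕ) (L : List (PRBPMove V)) : Prop :=
  ∃ t, PRBPReaches G r (PRBPInit G) L t ∧ (∀ v, G.IsSink v → v ∈ t.blue) ∧
    ∀ u v, G.E u v → (u, v) ∈ t.marked

def PRBPCost {V : Type} (L : List (PRBPMove V)) : ℕ := (L.map PRBPMove.ioCost).sum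

noncomputable def optPRBP (G : DirGraph V) (r : ℕ) : ℕ∞ :=
  sInf ((fun L => (PRBPCost L : ℕ∞)) '' {L | PRBPValid G r L})

/-- `s` is a state reached by some prefix of the pebbling `L`. -/
def PRBPPrefixState (G : DirGraph V) (r : ℕ) (L : List (PRBPMove V))
    (s : PRBPState V) : Prop :=
  ∃ L₁ L₂, L = L₁ ++ L₂ ∧ PRBPReaches G r (PRBPInit G) L₁ s

/-! ### Paths, dominators, S-partitions -/

/-- A directed path in `G` starting at a source node. -/
def IsSourcePath (G : DirGraph V) (p : List V) : Prop :=
  p ≠ [] ∧ p.Chain' G.E ∧ ∀ h : p ≠ [], G.IsSource (p.head h)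

/-- `D` is a dominator for the node set `V₀`. -/
def Dominates (G : DirGraph V) (D : Set V) (V₀ : Set V) : Prop :=
  ∀ p : List V, IsSourcePath G p → ∀ h : p ≠ [], p.getLast h ∈ V₀ →
    ∃ d ∈ D, d ∈ p

/-- The path `p` contains an edge of `E₀` (two consecutive nodes forming it). -/
def PathContainsEdge (p : List V) (E₀ : Set (V × V)) : Prop :=
  ∃ u v, (u, v) ∈ E₀ ∧ [u, v] <:+: p

/-- `D` is an edge-dominator for the edge set `E₀`. -/
def EdgeDominates (G : DirGraph V) (D : Set V) (E₀ : Set (V × V)) : Prop :=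
  ∀ p : List V, IsSourcePath G p → PathContainsEdge p E₀ → ∃ d ∈ D, d ∈ p

/-- The terminal set of a node set `V₀`: nodes of `V₀` with no out-neighbor in `V₀`. -/
def terminalSet (G : DirGraph V) (V₀ : Set V) : Set V :=
  {v | v ∈ V₀ ∧ ∀ w, G.E v w → w ∉ V₀}

/-- The edge-terminal set of an edge set `E₀`. -/
def edgeTerminalSet (E₀ : Set (V × V)) : Set V :=
  {v | (∃ u, (u, v) ∈ E₀) ∧ ∀ w, (v, w) ∉ E₀}

/-- An `S`-partition of the DAG `G` (Hong–Kung). -/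
def IsSPartition (G : DirGraph V) (S : ℕ) (k : ℕ) (P : Fin k → Set V) : Prop :=
  (∀ v : V, ∃! i, v ∈ P i) ∧
  (∀ i j : Fin k, j < i → ∀ u v, u ∈ P i → v ∈ P j → ¬ G.E u v) ∧
  (∀ i, ∃ D : Set V, D.ncard ≤ S ∧ Dominates G D (P i)) ∧
  (∀ i, (terminalSet G (P i)).ncard ≤ S)

/-- An `S`-dominator partition of the DAG `G`: an `S`-partition without the
terminal-set condition. -/
def IsSDomPartition (G : DirGraph V) (S : ℕ) (k : ℕ) (P : Fin k → Set V) : Prop :=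
  (∀ v : V, ∃! i, v ∈ P i) ∧
  (∀ i j : Fin k, j < i → ∀ u v, u ∈ P i → v ∈ P j → ¬ G.E u v) ∧
  (∀ i, ∃ D : Set V, D.ncard ≤ S ∧ Dominates G D (P i))

/-- An `S`-edge partition of the DAG `G`. -/
def IsSEdgePartition (G : DirGraph V) (S : ℕ) (k : ℕ)
    (P : Fin k → Set (V × V)) : Prop :=
  (∀ i, P i ⊆ {e | G.E e.1 e.2}) ∧
  (∀ u v, G.E u v → ∃! i, (u, v) ∈ P i) ∧
  (∀ i j : Fin k, i < j → ∀ u v w, G.E u v → G.E v w →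
      ¬ ((v, w) ∈ P i ∧ (u, v) ∈ P j)) ∧
  (∀ i, ∃ D : Set V, D.ncard ≤ S ∧ EdgeDominates G D (P i)) ∧
  (∀ i, (edgeTerminalSet (P i)).ncard ≤ S)

noncomputable def minEdgePartition (G : DirGraph V) (S : ℕ) : ℕ :=
  sInf {k | ∃ P : Fin k → Set (V × V), IsSEdgePartition G S k P}

noncomputable def minDomPartition (G : DirGraph V) (S : ℕ) : ℕ :=
  sInf {k | ∃ P : Fin k → Set V, IsSDomPartition G S k P}

noncomputable def minSPartition (G : DirGraph V) (S : ℕ) : ℕ :=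
  sInf {k | ∃ P : Fin k → Set V, IsSPartition G S k P}

/-! An RBP pebbling is replayed move by move in PRBP. A red pebble is kept light if the node also
carries a blue pebble and dark otherwise, and the marked edges are exactly the in-edges of the
computed nodes. SAVE and LOAD are copied (a SAVE onto a blue node is dropped), and a COMPUTE
becomes the PARTIAL COMPUTEs along the in-edges of the node; the capacity check is the same, since
all in-neighbours are already red. The only delicate move is DELETE of a dark red pebble, which
needs all out-edges marked: a computed node without pebbles can never become red again, so none
of its successors can be computed later, while, by acyclicity, every non-source node of a valid
RBP pebbling is computed in the end. -/

set_option linter.unusedSectionVars false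

namespace RBPState

variable {G : DirGraph V} {r : ℕ}

structure Invariant (G : DirGraph V) (s : RBPState V) : Prop where
  computed_of_mem : ∀ v, ¬G.IsSource v → v ∈ s.red ∨ v ∈ s.blue → v ∈ s.computed
  source_mem_blue : ∀ v, G.IsSource v → v ∈ s.blue
  computed_of_computed_succ :
    ∀ v ∈ s.computed, ∀ u, G.E u v → ¬G.IsSource u → u ∈ s.computed

theorem invariant_init : (RBPInit G).Invariant G where
  computed_of_mem v hv := by simp_all [RBPInit]
  source_mem_blue v hv := by simpa [RBPInit]
  computed_of_computed_succ v hv := by simp [RBPInit] at hv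

theorem Invariant.step {s t : RBPState V} {m : RBPMove V} (hs : s.Invariant G)
    (h : RBPStep G r s m t) : t.Invariant G := by
  obtain ⟨hred, hsrc, hsucc⟩ := hs
  cases m with
  | save v =>
    obtain ⟨hv, rfl⟩ := h
    exact ⟨by grind, by grind, hsucc⟩
  | load v =>
    obtain ⟨hv, -, rfl⟩ := h
    exact ⟨by grind, hsrc, hsucc⟩
  | compute v =>
    obtain ⟨-, -, hpred, -, rfl⟩ := h
    exact ⟨by grind, hsrc, by grind⟩
  | delete v =>
    obtain ⟨-, rfl⟩ := h
    exact ⟨by grind, hsrc, hsucc⟩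

theorem Invariant.reaches {s t : RBPState V} {L : List (RBPMove V)} (hs : s.Invariant G)
    (h : RBPReaches G r s L t) : t.Invariant G := by
  induction h with
  | nil => exact hs
  | cons hstep _ ih => exact ih (hs.step hstep)

def IsDead (s : RBPState V) (v : V) : Prop :=
  v ∉ s.red ∧ v ∉ s.blue ∧ v ∈ s.computed

theorem IsDead.step {s t : RBPState V} {m : RBPMove V} {v : V} (hv : s.IsDead v)
    (h : RBPStep G r s m t) :
    t.IsDead v ∧ ∀ w, G.E v w → w ∈ t.computed → w ∈ s.computed := by
  obtain ⟨hvr, hvb, hvc⟩ := hv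
  cases m with
  | save x =>
    obtain ⟨hx, rfl⟩ := h
    exact ⟨⟨hvr, by grind, hvc⟩, fun _ _ => id⟩
  | load x =>
    obtain ⟨hx, -, rfl⟩ := h
    exact ⟨⟨by grind, hvb, hvc⟩, fun _ _ => id⟩
  | compute x =>
    obtain ⟨-, hx, hpred, -, rfl⟩ := h
    exact ⟨⟨by grind, hvb, by grind⟩, by grind⟩
  | delete x =>
    obtain ⟨-, rfl⟩ := h
    exact ⟨⟨by grind, hvb, hvc⟩, fun _ _ => id⟩

theorem IsDead.computed_succ {s t : RBPState V} {L : List (RBPMove V)} {v : V}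
    (hv : s.IsDead v) (h : RBPReaches G r s L t) :
    ∀ w, G.E v w → w ∈ t.computed → w ∈ s.computed := by
  induction h with
  | nil => exact fun _ _ => id
  | cons hstep _ ih =>
    obtain ⟨hv', hsucc⟩ := hv.step hstep
    exact fun w hw hwt => hsucc w hw (ih hv' w hw hwt)

end RBPState

theorem DirGraph.Acyclic.wellFounded_flip [Finite V] {G : DirGraph V} (h : G.Acyclic) :
    WellFounded (flip G.E) := by
  have : IsTrans V (flip (Relation.TransGen G.E)) := ⟨fun _ _ _ h₁ h₂ => h₂.trans h₁⟩
  have : Std.Irrefl (flip (Relation.TransGen G.E)) := ⟨h⟩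
  exact Subrelation.wf (r := flip (Relation.TransGen G.E)) (fun h => .single h)
    (Finite.wellFounded_of_trans_of_irrefl _)

theorem RBPReaches.computed_of_not_isSource {G : DirGraph V} {r : ℕ} {t : RBPState V}
    {L : List (RBPMove V)} (hG : G.Acyclic) (h : RBPReaches G r (RBPInit G) L t)
    (hsink : ∀ v, G.IsSink v → v ∈ t.blue) :
    ∀ v, ¬G.IsSource v → v ∈ t.computed := by
  have ht := RBPState.invariant_init.reaches h
  intro v
  induction v using hG.wellFounded_flip.induction with
  | _ v ih =>
    intro hv
    by_cases hvs : G.IsSink v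
    · exact ht.computed_of_mem v hv (Or.inr (hsink v hvs))
    · obtain ⟨w, hvw⟩ := not_forall_not.mp hvs
      exact ht.computed_of_computed_succ w (ih w hvw fun hw => hw v hvw) v hvw hv

section PRBP

variable {G : DirGraph V} {r : ℕ}

theorem PRBPReaches.append {s t u : PRBPState V} {L₁ L₂ : List (PRBPMove V)}
    (h₁ : PRBPReaches G r s L₁ t) (h₂ : PRBPReaches G r t L₂ u) :
    PRBPReaches G r s (L₁ ++ L₂) u := by
  induction h₁ with
  | nil => exact h₂
  | cons hstep _ ih => exact .cons hstep (ih h₂)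

theorem PRBPCost_append (L₁ L₂ : List (PRBPMove V)) :
    PRBPCost (L₁ ++ L₂) = PRBPCost L₁ + PRBPCost L₂ := by
  simp [PRBPCost]

theorem PRBPCost_map_pcompute (l : List V) (v : V) :
    PRBPCost (l.map (PRBPMove.pcompute · v)) = 0 := by
  simp [PRBPCost, Function.comp_def, PRBPMove.ioCost]

theorem prbpStep_pcompute_of_notMem {A D B : Finset V} {M : Finset (V × V)} {u v : V}
    (huv : G.E u v) (hum : (u, v) ∉ M) (hready : ∀ w, G.E w u → (w, u) ∈ M)
    (hu : u ∈ A ∪ D) (hvA : v ∉ A) (hvB : v ∉ B) (hcard : (A ∪ insert v D).card ≤ r) :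
    PRBPStep G r ⟨A, D, B, M⟩ (.pcompute u v) ⟨A, insert v D, B, insert (u, v) M⟩ := by
  refine ⟨huv, hum, hready, hu, ?_, ?_, ?_⟩
  · by_cases hv : v ∈ A ∪ D
    · exact .inl hv
    · exact .inr ⟨hv, hvB⟩
  · simpa [Finset.erase_eq_of_notMem hvA] using hcard
  · simp [Finset.erase_eq_of_notMem hvA, Finset.erase_eq_of_notMem hvB]

theorem prbpReaches_map_pcompute {A D B : Finset V} {M : Finset (V × V)} {v : V}
    {l : List V} (hl : l.Nodup) (hE : ∀ u ∈ l, G.E u v) (hred : ∀ u ∈ l, u ∈ A ∪ D)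
    (hready : ∀ u ∈ l, ∀ w, G.E w u → (w, u) ∈ M) (hum : ∀ u ∈ l, (u, v) ∉ M)
    (hvA : v ∉ A) (hvB : v ∉ B) (hvD : v ∈ D ∨ l ≠ []) (hcard : (A ∪ insert v D).card ≤ r) :
    PRBPReaches G r ⟨A, D, B, M⟩ (l.map (PRBPMove.pcompute · v))
      ⟨A, insert v D, B, M ∪ (l.map (·, v)).toFinset⟩ := by
  induction l generalizing D M with
  | nil =>
    simp only [ne_eq, not_true_eq_false, or_false] at hvD
    simpa [Finset.insert_eq_of_mem hvD] using PRBPReaches.nil _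
  | cons u l ih =>
    simp only [List.nodup_cons, List.mem_cons, forall_eq_or_imp] at hl hE hred hready hum
    have hstep := prbpStep_pcompute_of_notMem hE.1 hum.1 hready.1 hred.1 hvA hvB hcard
    have hrest := ih (D := insert v D) (M := insert (u, v) M) hl.2 hE.2
      (fun x hx => by grind) (fun x hx w hw => by grind) (fun x hx => by grind)
      (.inl (Finset.mem_insert_self v D)) (by rwa [Finset.insert_idem])
    simpa [Finset.insert_idem, Finset.insert_union, Finset.union_insert] using
      PRBPReaches.cons hstep hrest

end PRBP

namespace RBPState

variable {G : DirGraph V} {r : ℕ}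

noncomputable def toPRBP (G : DirGraph V) (s : RBPState V) : PRBPState V :=
  ⟨s.red ∩ s.blue, s.red \ s.blue, s.blue,
    Finset.univ.filter fun e => G.E e.1 e.2 ∧ e.2 ∈ s.computed⟩

theorem toPRBP_init : (RBPInit G).toPRBP G = PRBPInit G := by
  simp [toPRBP, RBPInit, PRBPInit]

theorem toPRBP_lred_union_dred (s : RBPState V) :
    (s.toPRBP G).lred ∪ (s.toPRBP G).dred = s.red :=
  sup_inf_sdiff s.red s.blue

theorem exists_prbpReaches_of_save {s : RBPState V} {v : V} (hv : v ∈ s.red) :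
    ∃ L, PRBPReaches G r (s.toPRBP G) L ({ s with blue := insert v s.blue }.toPRBP G) ∧
      PRBPCost L ≤ 1 := by
  by_cases hvb : v ∈ s.blue
  · exact ⟨[], by simpa [Finset.insert_eq_of_mem hvb] using .nil _, zero_le_one⟩
  refine ⟨[.save v], .cons ⟨by simp [toPRBP, hv, hvb], ?_⟩ (.nil _), le_rfl⟩
  simp [toPRBP, Finset.inter_insert_of_mem hv, Finset.sdiff_insert]

theorem exists_prbpReaches_of_load {s : RBPState V} {v : V} (hv : v ∈ s.blue)
    (hcard : (insert v s.red).card ≤ r) :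
    ∃ L, PRBPReaches G r (s.toPRBP G) L ({ s with red := insert v s.red }.toPRBP G) ∧
      PRBPCost L ≤ 1 := by
  refine ⟨[.load v], .cons ⟨hv, ?_, ?_⟩ (.nil _), le_rfl⟩
  · rwa [Finset.insert_union, toPRBP_lred_union_dred]
  · simp [toPRBP, Finset.insert_inter_of_mem hv, Finset.insert_sdiff_of_mem _ hv]

theorem exists_prbpReaches_of_delete {s : RBPState V} {v : V} (hs : s.Invariant G)
    (hv : v ∈ s.red)
    (hdead : { s with red := s.red.erase v }.IsDead v → ∀ w, G.E v w → w ∈ s.computed) :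
    ∃ L, PRBPReaches G r (s.toPRBP G) L ({ s with red := s.red.erase v }.toPRBP G) ∧
      PRBPCost L ≤ 0 := by
  refine ⟨[.delete v], .cons ?_ (.nil _), le_rfl⟩
  by_cases hvb : v ∈ s.blue
  · refine .inl ⟨by simp [toPRBP, hv, hvb], ?_⟩
    simp [toPRBP, Finset.erase_inter, Finset.erase_sdiff_comm, hvb]
  · have hvc : v ∈ s.computed :=
      hs.computed_of_mem v (fun hsrc => hvb (hs.source_mem_blue v hsrc)) (.inl hv)
    refine .inr ⟨by simp [toPRBP, hv, hvb], fun w hw => ?_, ?_⟩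
    · simpa [toPRBP, hw] using hdead ⟨by simp, hvb, hvc⟩ w hw
    · simp [toPRBP, Finset.erase_inter, Finset.erase_sdiff_comm, hvb]

theorem exists_prbpReaches_of_compute {s : RBPState V} {v : V} (hs : s.Invariant G)
    (hsrc : ¬G.IsSource v) (hvc : v ∉ s.computed) (hpred : ∀ u, G.E u v → u ∈ s.red)
    (hcard : (insert v s.red).card ≤ r) :
    ∃ L, PRBPReaches G r (s.toPRBP G) L
      ({ s with red := insert v s.red, computed := insert v s.computed }.toPRBP G) ∧
      PRBPCost L ≤ 0 := by
  have hvb : v ∉ s.blue := fun h => hvc (hs.computed_of_mem v hsrc (.inr h))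
  set l := (Finset.univ.filter (G.E · v)).toList
  have hl : ∀ u, u ∈ l ↔ G.E u v := by simp [l]
  have hl_ne : l ≠ [] := by
    obtain ⟨u, hu⟩ := not_forall_not.mp hsrc
    exact List.ne_nil_of_mem ((hl u).mpr hu)
  have hreach := prbpReaches_map_pcompute (G := G) (r := r) (B := (s.toPRBP G).blue)
    (A := (s.toPRBP G).lred) (D := (s.toPRBP G).dred) (M := (s.toPRBP G).marked)
    (Finset.nodup_toList _) (fun u hu => (hl u).mp hu)
    (fun u hu => by rw [toPRBP_lred_union_dred]; exact hpred u ((hl u).mp hu))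
    (fun u hu w hw => by
      have hu := (hl u).mp hu
      simpa [toPRBP, hw] using hs.computed_of_mem u (fun h => h w hw) (.inl (hpred u hu)))
    (fun u hu => by simp [toPRBP, hvc]) (by simp [toPRBP, hvb]) hvb (.inr hl_ne)
    (by rwa [Finset.union_insert, toPRBP_lred_union_dred])
  refine ⟨_, ?_, (PRBPCost_map_pcompute l v).le⟩
  convert hreach using 2
  · simp [toPRBP, Finset.insert_inter_of_notMem hvb]
  · simp [toPRBP, Finset.insert_sdiff_of_notMem _ hvb]
  · rfl
  · ext ⟨a, b⟩
    simp only [toPRBP, Finset.mem_filter, Finset.mem_univ, true_and, Finset.mem_insert,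
      Finset.mem_union, List.mem_toFinset, List.mem_map, Prod.mk.injEq]
    grind

theorem Invariant.exists_prbpReaches_of_step {s t : RBPState V} {m : RBPMove V}
    (hs : s.Invariant G) (h : RBPStep G r s m t)
    (hdead : ∀ v, t.IsDead v → ∀ w, G.E v w → w ∈ t.computed) :
    ∃ L, PRBPReaches G r (s.toPRBP G) L (t.toPRBP G) ∧ PRBPCost L ≤ m.ioCost := by
  cases m with
  | save v =>
    obtain ⟨hv, rfl⟩ := h
    exact exists_prbpReaches_of_save hv
  | load v =>
    obtain ⟨hv, hcard, rfl⟩ := h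
    exact exists_prbpReaches_of_load hv hcard
  | compute v =>
    obtain ⟨hsrc, hvc, hpred, hcard, rfl⟩ := h
    exact exists_prbpReaches_of_compute hs hsrc hvc hpred hcard
  | delete v =>
    obtain ⟨hv, rfl⟩ := h
    exact exists_prbpReaches_of_delete hs hv (hdead v)

theorem Invariant.exists_prbpReaches {s t : RBPState V} {L : List (RBPMove V)}
    (hs : s.Invariant G) (h : RBPReaches G r s L t)
    (hfin : ∀ v, ¬G.IsSource v → v ∈ t.computed) :
    ∃ L', PRBPReaches G r (s.toPRBP G) L' (t.toPRBP G) ∧ PRBPCost L' ≤ RBPCost L := by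
  induction h with
  | nil s => exact ⟨[], .nil _, le_rfl⟩
  | @cons s t u m L hstep hrest ih =>
    have hdead (v : V) (hv : t.IsDead v) (w : V) (hvw : G.E v w) : w ∈ t.computed :=
      hv.computed_succ hrest w hvw (hfin w fun hw => hw v hvw)
    obtain ⟨L₁, h₁, hc₁⟩ := hs.exists_prbpReaches_of_step hstep hdead
    obtain ⟨L₂, h₂, hc₂⟩ := ih (hs.step hstep) hfin
    refine ⟨L₁ ++ L₂, h₁.append h₂, ?_⟩
    rw [PRBPCost_append]
    exact add_le_add hc₁ hc₂

end RBPState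

theorem RBPValid.exists_prbpValid {G : DirGraph V} {r : ℕ} {L : List (RBPMove V)}
    (hG : G.Acyclic) (hL : RBPValid G r L) :
    ∃ L', PRBPValid G r L' ∧ PRBPCost L' ≤ RBPCost L := by
  obtain ⟨t, ht, hsink⟩ := hL
  have hfin := ht.computed_of_not_isSource hG hsink
  obtain ⟨L', hL', hcost⟩ := RBPState.invariant_init.exists_prbpReaches ht hfin
  rw [RBPState.toPRBP_init] at hL'
  refine ⟨L', ⟨_, hL', hsink, fun u v huv => ?_⟩, hcost⟩
  simpa [RBPState.toPRBP, huv] using hfin v fun hv => hv u huv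

theorem prbp_le_rbp_general {V : Type} [Fintype V] [DecidableEq V] (G : DirGraph V)
    (hacyc : G.Acyclic) (r : ℕ) :
    optPRBP G r ≤ optRBP G r ∧
      ∀ L : List (RBPMove V), RBPValid G r L →
        ∃ L' : List (PRBPMove V), PRBPValid G r L' ∧ PRBPCost L' ≤ RBPCost L := by
  refine ⟨le_sInf ?_, fun L hL => hL.exists_prbpValid hacyc⟩
  rintro _ ⟨L, hL, rfl⟩
  obtain ⟨L', hL', hcost⟩ := hL.exists_prbpValid hacyc
  calc optPRBP G r ≤ PRBPCost L' := sInf_le ⟨L', hL', rfl⟩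
    _ ≤ RBPCost L := by exact_mod_cast hcost

/-- For any finite DAG `G` with no isolated nodes and any capacity
`r ≥ Δ_in + 1`, we have `OPT_PRBP(G,r) ≤ OPT_RBP(G,r)`; in particular every valid
RBP pebbling of cost `C` induces a valid PRBP pebbling of cost at most `C`. -/
theorem prbp_le_rbp {V : Type} [Fintype V] [DecidableEq V] (G : DirGraph V)
    (hacyc : G.Acyclic) (hiso : G.NoIsolated) (r : ℕ) (hr : G.maxInDeg + 1 ≤ r) :
    optPRBP G r ≤ optRBP G r ∧
      ∀ L : List (RBPMove V), RBPValid G r L →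
        ∃ L' : List (PRBPMove V), PRBPValid G r L' ∧ PRBPCost L' ≤ RBPCost L :=
  prbp_le_rbp_general G hacyc r
end

section
/- For every finite DAG G, a valid pebbling in the partial-computing red-blue pebble game exists with fast-memory capacity r = 2: processing nodes in a topological order and marking the in-edges of each node one by one, loading inputs and saving outputs as needed, yields a valid PRBP pebbling. -/
open scoped Classical

variable {V : Type} [Fintype V] [DecidableEq V]

/-! Pebble the nodes one at a time in a topological order. A non-source node `v` is handled by
marking its in-edges one by one (load the in-neighbour `u`, mark `(u, v)`, delete `u`), so that
only `u` and `v` are ever red, and then saving `v`. Between two nodes no red pebble is left,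
the processed nodes are blue and exactly the edges into them are marked (`processedState`). -/

open Relation

omit [Fintype V] in
def PRBPStepRel (G : DirGraph V) (r : ℕ) (s t : PRBPState V) : Prop :=
  ∃ m, PRBPStep G r s m t

omit [Fintype V] in
theorem exists_prbpReaches_of_reflTransGen {G : DirGraph V} {r : ℕ} {s t : PRBPState V}
    (h : ReflTransGen (PRBPStepRel G r) s t) : ∃ L, PRBPReaches G r s L t := by
  induction h using ReflTransGen.head_induction_on with
  | refl => exact ⟨[], .nil _⟩
  | head hstep _ ih =>
    obtain ⟨m, hm⟩ := hstep
    obtain ⟨L, hL⟩ := ih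
    exact ⟨m :: L, .cons hm hL⟩

omit [Fintype V] in
theorem reflTransGen_load_pcompute_delete {G : DirGraph V} {u v : V} {D B : Finset V}
    {M : Finset (V × V)} (huv : G.E u v) (hu : u ∈ B) (hv : v ∉ B) (hD : D ⊆ {v})
    (hin : ∀ w, G.E w u → (w, u) ∈ M) (hnew : (u, v) ∉ M) :
    ReflTransGen (PRBPStepRel G 2) ⟨∅, D, B, M⟩ ⟨∅, {v}, B, insert (u, v) M⟩ := by
  have hne : u ≠ v := by rintro rfl; exact hv hu
  have hcard : ({u, v} : Finset V).card ≤ 2 := Finset.card_le_two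
  have hload : PRBPStep G 2 ⟨∅, D, B, M⟩ (.load u) ⟨{u}, D, B, M⟩ := by
    refine ⟨hu, (Finset.card_le_card ?_).trans hcard, by simp⟩
    exact Finset.union_subset (by simp) (hD.trans (by simp))
  have hmark : PRBPStep G 2 ⟨{u}, D, B, M⟩ (.pcompute u v) ⟨{u}, {v}, B, insert (u, v) M⟩ := by
    rcases Finset.subset_singleton_iff.mp hD with rfl | rfl <;>
      simpa [PRBPStep, PRBPState.red, huv, hnew, hv, hne, hne.symm] using hin
  have hdelete : PRBPStep G 2 ⟨{u}, {v}, B, insert (u, v) M⟩ (.delete u)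
      ⟨∅, {v}, B, insert (u, v) M⟩ :=
    .inl ⟨Finset.mem_singleton_self u, by simp⟩
  exact .tail (.tail (.single ⟨_, hload⟩) ⟨_, hmark⟩) ⟨_, hdelete⟩

omit [Fintype V] in
theorem reflTransGen_mark_inEdges {G : DirGraph V} {v : V} {B N : Finset V}
    {M : Finset (V × V)} (hN : N.Nonempty) (hE : ∀ u ∈ N, G.E u v) (hNB : N ⊆ B) (hv : v ∉ B)
    (hin : ∀ u ∈ N, ∀ w, G.E w u → (w, u) ∈ M) (hnew : ∀ u ∈ N, (u, v) ∉ M) :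
    ReflTransGen (PRBPStepRel G 2) ⟨∅, ∅, B, M⟩ ⟨∅, {v}, B, M ∪ N ×ˢ {v}⟩ := by
  induction hN using Finset.Nonempty.cons_induction with
  | singleton u =>
    have h := reflTransGen_load_pcompute_delete (hE u (by simp)) (hNB (by simp)) hv
      (Finset.empty_subset _) (hin u (by simp)) (hnew u (by simp))
    rwa [Finset.singleton_product_singleton, Finset.union_singleton]
  | cons u N hu _ ih =>
    have hN : ∀ x ∈ N, x ∈ Finset.cons u N hu := fun x hx => Finset.mem_cons_of_mem hx
    have hu' : u ∈ Finset.cons u N hu := Finset.mem_cons_self u N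
    refine (ih (fun x hx => hE x (hN x hx)) ((Finset.subset_cons hu).trans hNB)
      (fun x hx => hin x (hN x hx)) (fun x hx => hnew x (hN x hx))).trans ?_
    have h := reflTransGen_load_pcompute_delete (D := {v}) (M := M ∪ N ×ˢ {v}) (hE u hu')
      (hNB hu') hv subset_rfl (fun w hw => Finset.mem_union_left _ (hin u hu' w hw))
      (by simp [hnew u hu', hu])
    convert h using 3
    ext e
    simp only [Finset.mem_union, Finset.mem_product, Finset.mem_cons, Finset.mem_singleton,
      Finset.mem_insert, Prod.ext_iff]
    tauto

omit [Fintype V] in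
theorem reflTransGen_save_delete (G : DirGraph V) (r : ℕ) (v : V) (B : Finset V)
    (M : Finset (V × V)) :
    ReflTransGen (PRBPStepRel G r) ⟨∅, {v}, B, M⟩ ⟨∅, ∅, insert v B, M⟩ := by
  have hsave : PRBPStep G r ⟨∅, {v}, B, M⟩ (.save v) ⟨{v}, ∅, insert v B, M⟩ := by
    simp [PRBPStep]
  have hdelete : PRBPStep G r ⟨{v}, ∅, insert v B, M⟩ (.delete v) ⟨∅, ∅, insert v B, M⟩ :=
    .inl ⟨Finset.mem_singleton_self v, by simp⟩
  exact .tail (.single ⟨_, hsave⟩) ⟨_, hdelete⟩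

noncomputable def processedState (G : DirGraph V) (S : Finset V) : PRBPState V :=
  ⟨∅, ∅, Finset.univ.filter G.IsSource ∪ S, Finset.univ.filter fun e => G.E e.1 e.2 ∧ e.2 ∈ S⟩

theorem processedState_empty (G : DirGraph V) : processedState G ∅ = PRBPInit G := by
  simp [processedState, PRBPInit]

theorem processedState_insert_of_isSource (G : DirGraph V) (S : Finset V) {v : V}
    (hsrc : G.IsSource v) : processedState G (insert v S) = processedState G S := by
  simp only [processedState, PRBPState.mk.injEq, true_and]
  constructor
  · rw [Finset.union_insert, Finset.insert_eq_of_mem (by simpa using Or.inl hsrc)]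
  · ext e
    simp only [Finset.mem_filter, Finset.mem_univ, true_and, Finset.mem_insert]
    exact ⟨fun ⟨he, h⟩ => ⟨he, h.resolve_left fun h' => hsrc e.1 (h' ▸ he)⟩,
      fun ⟨he, h⟩ => ⟨he, .inr h⟩⟩

theorem processedState_insert (G : DirGraph V) (S : Finset V) (v : V) :
    processedState G (insert v S) = ⟨∅, ∅, insert v (processedState G S).blue,
      (processedState G S).marked ∪ Finset.univ.filter (G.E · v) ×ˢ {v}⟩ := by
  simp only [processedState, PRBPState.mk.injEq, true_and]
  refine ⟨Finset.union_insert _ _ _, ?_⟩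
  ext ⟨a, b⟩
  simp only [Finset.mem_filter, Finset.mem_univ, true_and, Finset.mem_insert,
    Finset.mem_union, Finset.mem_product, Finset.mem_singleton]
  constructor
  · rintro ⟨hab, rfl | hb⟩
    · exact .inr ⟨hab, rfl⟩
    · exact .inl ⟨hab, hb⟩
  · rintro (⟨hab, hb⟩ | ⟨hab, rfl⟩)
    · exact ⟨hab, .inr hb⟩
    · exact ⟨hab, .inl rfl⟩

theorem reflTransGen_processedState_insert (G : DirGraph V) {S : Finset V} {v : V}
    (hv : v ∉ S) (hpred : ∀ u, G.E u v → u ∈ S) :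
    ReflTransGen (PRBPStepRel G 2) (processedState G S) (processedState G (insert v S)) := by
  by_cases hsrc : G.IsSource v
  · rw [processedState_insert_of_isSource G S hsrc]
  have hN : (Finset.univ.filter (G.E · v)).Nonempty := by
    simpa [DirGraph.IsSource, Finset.filter_nonempty_iff] using hsrc
  rw [processedState_insert]
  refine (reflTransGen_mark_inEdges hN (by simp) ?_ ?_ ?_ ?_).trans
    (reflTransGen_save_delete G 2 v _ _)
  · intro u hu
    simpa [processedState] using Or.inr (hpred u (by simpa using hu))
  · simpa [processedState] using ⟨hsrc, hv⟩
  · intro u hu w hw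
    simpa [processedState] using ⟨hw, hpred u (by simpa using hu)⟩
  · intro u _
    simp [hv]

omit [DecidableEq V] in
theorem DirGraph.Acyclic.exists_notMem_forall_pred_mem {G : DirGraph V} (hacyc : G.Acyclic)
    {S : Finset V} (hS : S ≠ Finset.univ) : ∃ v ∉ S, ∀ u, G.E u v → u ∈ S := by
  have : IsTrans V (TransGen G.E) := ⟨fun _ _ _ => TransGen.trans⟩
  have : Std.Irrefl (TransGen G.E) := ⟨hacyc⟩
  obtain ⟨v, hv, hmin⟩ := (Finite.wellFounded_of_trans_of_irrefl (TransGen G.E)).has_min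
    {v | v ∉ S} (by simpa [Finset.eq_univ_iff_forall, Set.Nonempty] using hS)
  exact ⟨v, hv, fun u hu => by_contra fun huS => hmin u huS (.single hu)⟩

theorem reflTransGen_processedState_univ {G : DirGraph V} (hacyc : G.Acyclic) :
    ReflTransGen (PRBPStepRel G 2) (processedState G ∅) (processedState G Finset.univ) := by
  rw [← Finset.top_eq_univ]
  refine WellFoundedGT.induction_top ⟨∅, .refl⟩ fun S hS hreach => ?_
  obtain ⟨v, hv, hpred⟩ := hacyc.exists_notMem_forall_pred_mem hS
  exact ⟨insert v S, Finset.ssubset_insert hv,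
    hreach.trans (reflTransGen_processedState_insert G hv hpred)⟩

/-- For every finite DAG, a valid PRBP pebbling exists already with
fast-memory capacity `r = 2`. -/
theorem prbp_valid_with_two_pebbles {V : Type} [Fintype V] [DecidableEq V]
    (G : DirGraph V) (hacyc : G.Acyclic) :
    ∃ L : List (PRBPMove V), PRBPValid G 2 L := by
  obtain ⟨L, hL⟩ := exists_prbpReaches_of_reflTransGen (reflTransGen_processedState_univ hacyc)
  rw [processedState_empty] at hL
  exact ⟨L, _, hL, fun v _ => by simp [processedState], fun u v huv => by simp [processedState, huv]⟩
end

section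
/- Consider the DAG with nodes u_0, u_1, u_2, w_1, w_2, w_3, w_4, v_1, v_2, v_0 and edges (u_0,u_1), (u_0,u_2), (u_1,w_1), (u_1,w_2), (w_1,w_3), (w_2,w_3), (u_1,w_4), (w_3,w_4), (w_4,v_1), (w_4,v_2), (u_2,v_1), (u_2,v_2), (v_1,v_0), (v_2,v_0). With fast-memory capacity r = 4, the optimal cost in the one-shot red-blue pebble game is OPT_RBP = 3, while the optimal cost in the partial-computing red-blue pebble game is OPT_PRBP = 2. -/
open scoped Classical

variable {V : Type} [Fintype V] [DecidableEq V]

/-- The example DAG of Figure 1: nodes `0 = u₀, 1 = u₁, 2 = u₂, 3 = w₁, 4 = w₂,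
5 = w₃, 6 = w₄, 7 = v₁, 8 = v₂, 9 = v₀`. -/
def exEdges : List (Fin 10 × Fin 10) :=
  [(0, 1), (0, 2), (1, 3), (1, 4), (3, 5), (4, 5), (1, 6), (5, 6),
   (6, 7), (6, 8), (2, 7), (2, 8), (7, 9), (8, 9)]

def exG : DirGraph (Fin 10) := ⟨fun a b => (a, b) ∈ exEdges⟩

instance (a b : Fin 10) : Decidable (exG.E a b) :=
  inferInstanceAs (Decidable ((a, b) ∈ exEdges))

instance (v : Fin 10) : Decidable (exG.IsSource v) :=
  inferInstanceAs (Decidable (∀ u, ¬ exG.E u v))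

instance (v : Fin 10) : Decidable (exG.IsSink v) :=
  inferInstanceAs (Decidable (∀ u, ¬ exG.E v u))

lemma source_iff : ∀ v : Fin 10, exG.IsSource v ↔ v = 0 := by decide

lemma rbpInit_eq : RBPInit exG = ⟨∅, {0}, ∅⟩ := by
  unfold RBPInit
  congr 1
  ext v
  simp only [Finset.mem_filter, Finset.mem_univ, true_and, Finset.mem_singleton, source_iff v]

lemma prbpInit_eq : PRBPInit exG = ⟨∅, ∅, {0}, ∅⟩ := by
  unfold PRBPInit
  congr 1
  ext v
  simp only [Finset.mem_filter, Finset.mem_univ, true_and, Finset.mem_singleton, source_iff v]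

open RBPMove in
def rbpL : List (RBPMove (Fin 10)) :=
  [load 0, compute 1, compute 3, compute 4, delete 0, compute 5, delete 3,
   delete 4, compute 6, delete 1, delete 5, load 0, compute 2, delete 0,
   compute 7, compute 8, delete 6, delete 2, compute 9, save 9]

lemma rbp_upper : RBPValid exG 4 rbpL := by
  rw [RBPValid, rbpInit_eq]
  refine ⟨_, .cons ⟨by decide, by decide, rfl⟩ <| -- load 0
      .cons ⟨by decide, by decide, by decide, by decide, rfl⟩ <| -- compute 1
      .cons ⟨by decide, by decide, by decide, by decide, rfl⟩ <| -- compute 3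
      .cons ⟨by decide, by decide, by decide, by decide, rfl⟩ <| -- compute 4
      .cons ⟨by decide, rfl⟩ <| -- delete 0
      .cons ⟨by decide, by decide, by decide, by decide, rfl⟩ <| -- compute 5
      .cons ⟨by decide, rfl⟩ <| -- delete 3
      .cons ⟨by decide, rfl⟩ <| -- delete 4
      .cons ⟨by decide, by decide, by decide, by decide, rfl⟩ <| -- compute 6
      .cons ⟨by decide, rfl⟩ <| -- delete 1
      .cons ⟨by decide, rfl⟩ <| -- delete 5
      .cons ⟨by decide, by decide, rfl⟩ <| -- load 0
      .cons ⟨by decide, by decide, by decide, by decide, rfl⟩ <| -- compute 2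
      .cons ⟨by decide, rfl⟩ <| -- delete 0
      .cons ⟨by decide, by decide, by decide, by decide, rfl⟩ <| -- compute 7
      .cons ⟨by decide, by decide, by decide, by decide, rfl⟩ <| -- compute 8
      .cons ⟨by decide, rfl⟩ <| -- delete 6
      .cons ⟨by decide, rfl⟩ <| -- delete 2
      .cons ⟨by decide, by decide, by decide, by decide, rfl⟩ <| -- compute 9
      .cons ⟨by decide, rfl⟩ <| -- save 9
      .nil _, by decide⟩

lemma rbp_cost : RBPCost rbpL = 3 := by decide

open PRBPMove in
def prbpL : List (PRBPMove (Fin 10)) :=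
  [load 0, pcompute 0 1, pcompute 1 3, pcompute 3 5, delete 3, pcompute 1 4,
   pcompute 4 5, delete 4, pcompute 1 6, pcompute 5 6, delete 5, delete 1,
   pcompute 0 2, delete 0, pcompute 2 7, pcompute 6 7, pcompute 2 8,
   pcompute 6 8, delete 2, delete 6, pcompute 7 9, pcompute 8 9, delete 7,
   delete 8, save 9]

lemma prbp_upper : PRBPValid exG 4 prbpL := by
  rw [PRBPValid, prbpInit_eq]
  refine ⟨_, .cons ⟨by decide, by decide, rfl⟩ <| -- load 0
      .cons ⟨by decide, by decide, by decide, by decide, by decide, by decide, rfl⟩ <| -- pc 0 1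
      .cons ⟨by decide, by decide, by decide, by decide, by decide, by decide, rfl⟩ <| -- pc 1 3
      .cons ⟨by decide, by decide, by decide, by decide, by decide, by decide, rfl⟩ <| -- pc 3 5
      .cons (.inr ⟨by decide, by decide, rfl⟩) <| -- delete 3
      .cons ⟨by decide, by decide, by decide, by decide, by decide, by decide, rfl⟩ <| -- pc 1 4
      .cons ⟨by decide, by decide, by decide, by decide, by decide, by decide, rfl⟩ <| -- pc 4 5
      .cons (.inr ⟨by decide, by decide, rfl⟩) <| -- delete 4
      .cons ⟨by decide, by decide, by decide, by decide, by decide, by decide, rfl⟩ <| -- pc 1 6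
      .cons ⟨by decide, by decide, by decide, by decide, by decide, by decide, rfl⟩ <| -- pc 5 6
      .cons (.inr ⟨by decide, by decide, rfl⟩) <| -- delete 5
      .cons (.inr ⟨by decide, by decide, rfl⟩) <| -- delete 1
      .cons ⟨by decide, by decide, by decide, by decide, by decide, by decide, rfl⟩ <| -- pc 0 2
      .cons (.inl ⟨by decide, rfl⟩) <| -- delete 0
      .cons ⟨by decide, by decide, by decide, by decide, by decide, by decide, rfl⟩ <| -- pc 2 7
      .cons ⟨by decide, by decide, by decide, by decide, by decide, by decide, rfl⟩ <| -- pc 6 7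
      .cons ⟨by decide, by decide, by decide, by decide, by decide, by decide, rfl⟩ <| -- pc 2 8
      .cons ⟨by decide, by decide, by decide, by decide, by decide, by decide, rfl⟩ <| -- pc 6 8
      .cons (.inr ⟨by decide, by decide, rfl⟩) <| -- delete 2
      .cons (.inr ⟨by decide, by decide, rfl⟩) <| -- delete 6
      .cons ⟨by decide, by decide, by decide, by decide, by decide, by decide, rfl⟩ <| -- pc 7 9
      .cons ⟨by decide, by decide, by decide, by decide, by decide, by decide, rfl⟩ <| -- pc 8 9
      .cons (.inr ⟨by decide, by decide, rfl⟩) <| -- delete 7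
      .cons (.inr ⟨by decide, by decide, rfl⟩) <| -- delete 8
      .cons ⟨by decide, rfl⟩ <| -- save 9
      .nil _, by decide, by decide⟩

lemma prbp_cost : PRBPCost prbpL = 2 := by decide

set_option linter.unusedSectionVars false
section Lower
variable {W : Type} [Fintype W] [DecidableEq W]

def nloads : List (RBPMove W) → ℕ
  | [] => 0
  | (RBPMove.load _) :: L => nloads L + 1
  | _ :: L => nloads L

def nsaves : List (RBPMove W) → ℕ
  | [] => 0
  | (RBPMove.save _) :: L => nsaves L + 1
  | _ :: L => nsaves L

def pnloads : List (PRBPMove W) → ℕ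
  | [] => 0
  | (PRBPMove.load _) :: L => pnloads L + 1
  | _ :: L => pnloads L

def pnsaves : List (PRBPMove W) → ℕ
  | [] => 0
  | (PRBPMove.save _) :: L => pnsaves L + 1
  | _ :: L => pnsaves L

lemma rbp_cost_eq (L : List (RBPMove W)) :
    RBPCost L = nloads L + nsaves L := by
  induction L with
  | nil => rfl
  | cons m L ih =>
      have : RBPCost (m :: L) = m.ioCost + RBPCost L := by
        simp [RBPCost]
      rw [this, ih]
      cases m <;> simp [RBPMove.ioCost, nloads, nsaves] <;> omega

lemma prbp_cost_eq (L : List (PRBPMove W)) :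
    PRBPCost L = pnloads L + pnsaves L := by
  induction L with
  | nil => rfl
  | cons m L ih =>
      have : PRBPCost (m :: L) = m.ioCost + PRBPCost L := by
        simp [PRBPCost]
      rw [this, ih]
      cases m <;> simp [PRBPMove.ioCost, pnloads, pnsaves] <;> omega

lemma rbp_blue_stable {G : DirGraph W} {r : ℕ} {s t : RBPState W} {L : List (RBPMove W)}
    (h : RBPReaches G r s L t) (hs : nsaves L = 0) : t.blue = s.blue := by
  induction h with
  | nil => rfl
  | @cons s t u m L hstep htail ih =>
      cases m with
      | save v => simp [nsaves] at hs
      | load v => obtain ⟨-, -, rfl⟩ := hstep; exact ih (by simpa [nsaves] using hs)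
      | compute v => obtain ⟨-, -, -, -, rfl⟩ := hstep; exact ih (by simpa [nsaves] using hs)
      | delete v => obtain ⟨-, rfl⟩ := hstep; exact ih (by simpa [nsaves] using hs)

lemma prbp_blue_stable {G : DirGraph W} {r : ℕ} {s t : PRBPState W} {L : List (PRBPMove W)}
    (h : PRBPReaches G r s L t) (hs : pnsaves L = 0) : t.blue ⊆ s.blue := by
  induction h with
  | nil => exact fun _ h => h
  | @cons s t u m L hstep htail ih =>
      cases m with
      | save v => simp [pnsaves] at hs
      | load v =>
          obtain ⟨-, -, rfl⟩ := hstep; exact ih (by simpa [pnsaves] using hs)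
      | pcompute u v =>
          obtain ⟨-, -, -, -, -, -, rfl⟩ := hstep
          exact (ih (by simpa [pnsaves] using hs)).trans (Finset.erase_subset _ _)
      | delete v =>
          rcases hstep with ⟨-, rfl⟩ | ⟨-, -, rfl⟩ <;> exact ih (by simpa [pnsaves] using hs)

/-- invariant for PRBP runs with no loads -/
def PJ (s : PRBPState (Fin 10)) : Prop :=
  0 ∉ s.lred ∧ 0 ∉ s.dred ∧ ((0 : Fin 10), (1 : Fin 10)) ∉ s.marked

lemma prbp_noload {s t : PRBPState (Fin 10)} {L : List (PRBPMove (Fin 10))}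
    (h : PRBPReaches exG 4 s L t) (hl : pnloads L = 0)
    (hj : PJ s) : PJ t := by
  induction h with
  | nil => exact hj
  | @cons s t u m L hstep htail ih =>
      obtain ⟨j1, j2, j3⟩ := hj
      have hl' : pnloads L = 0 := by cases m <;> simpa [pnloads] using hl
      cases m with
      | load v => simp [pnloads] at hl
      | save v =>
          obtain ⟨hv, rfl⟩ := hstep
          refine ih hl' ⟨?_, ?_, j3⟩
          · simp only [Finset.mem_insert]
            rintro (rfl | h); exacts [j2 hv, j1 h]
          · simp only [Finset.mem_erase]
            rintro ⟨-, h⟩; exact j2 h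
      | pcompute a b =>
          obtain ⟨he, -, -, hared, -, -, rfl⟩ := hstep
          refine ih hl' ⟨?_, ?_, ?_⟩
          · intro h; exact j1 (Finset.mem_of_mem_erase h)
          · simp only [Finset.mem_insert]
            rintro (rfl | h)
            · exact (by decide : ∀ a : Fin 10, ¬ exG.E a 0) a he
            · exact j2 h
          · simp only [Finset.mem_insert, Prod.mk.injEq]
            rintro (⟨rfl, rfl⟩ | h)
            · rcases Finset.mem_union.1 hared with h | h
              exacts [j1 h, j2 h]
            · exact j3 h
      | delete v =>
          rcases hstep with ⟨-, rfl⟩ | ⟨-, -, rfl⟩ <;>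
            refine ih hl' ⟨?_, ?_, j3⟩
          · intro h; exact j1 (Finset.mem_of_mem_erase h)
          · exact j2
          · exact j1
          · intro h; exact j2 (Finset.mem_of_mem_erase h)

lemma prbp_lower {L : List (PRBPMove (Fin 10))} (h : PRBPValid exG 4 L) :
    2 ≤ PRBPCost L := by
  obtain ⟨t, hr, hsink, hmark⟩ := h
  rw [prbpInit_eq] at hr
  rw [prbp_cost_eq]
  have hs : pnsaves L ≠ 0 := by
    intro h0
    have := prbp_blue_stable hr h0 (hsink 9 (by decide))
    simp at this
  have hl : pnloads L ≠ 0 := by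
    intro h0
    have := prbp_noload hr h0 (by refine ⟨by simp, by simp, by simp⟩)
    exact this.2.2 (hmark 0 1 (by decide))
  omega

end Lower

/-! ### RBP lower bound machinery -/

/-- "node k may still become red in the future" (necessary conditions),
for runs with no remaining loads. -/
def a0 (s : RBPState (Fin 10)) : Prop := 0 ∈ s.red
def a1 (s : RBPState (Fin 10)) : Prop := 1 ∈ s.red ∨ (1 ∉ s.computed ∧ a0 s)
def a2 (s : RBPState (Fin 10)) : Prop := 2 ∈ s.red ∨ (2 ∉ s.computed ∧ a0 s)
def a3 (s : RBPState (Fin 10)) : Prop := 3 ∈ s.red ∨ (3 ∉ s.computed ∧ a1 s)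
def a4 (s : RBPState (Fin 10)) : Prop := 4 ∈ s.red ∨ (4 ∉ s.computed ∧ a1 s)
def a5 (s : RBPState (Fin 10)) : Prop := 5 ∈ s.red ∨ (5 ∉ s.computed ∧ a3 s ∧ a4 s)
def a6 (s : RBPState (Fin 10)) : Prop := 6 ∈ s.red ∨ (6 ∉ s.computed ∧ a1 s ∧ a5 s)
def a7 (s : RBPState (Fin 10)) : Prop := 7 ∈ s.red ∨ (7 ∉ s.computed ∧ a2 s ∧ a6 s)
def a8 (s : RBPState (Fin 10)) : Prop := 8 ∈ s.red ∨ (8 ∉ s.computed ∧ a2 s ∧ a6 s)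

def InvClosed (C : Finset (Fin 10)) : Prop :=
  ∀ u w : Fin 10, exG.E w u → u ∈ C → (w = 0 ∨ w ∈ C)

def RInv (b : ℕ) (s : RBPState (Fin 10)) : Prop :=
  9 ∉ s.blue ∧ 9 ∉ s.red ∧ 9 ∉ s.computed ∧
  (∀ v ∈ s.red, v = 0 ∨ v ∈ s.computed) ∧
  InvClosed s.computed ∧
  (b = 1 → s.red = ∅ ∧ s.computed = ∅ ∧ s.blue = {0}) ∧
  (5 ∈ s.computed → ¬(a7 s ∧ a8 s))

lemma a_mono {s t : RBPState (Fin 10)} (hr : t.red ⊆ s.red)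
    (hc : t.computed = s.computed) : (a7 t → a7 s) ∧ (a8 t → a8 s) := by
  have h0 : a0 t → a0 s := fun h => hr h
  have h1 : a1 t → a1 s := by
    rw [a1, a1, hc]; exact Or.imp (fun h => hr h) (And.imp_right h0)
  have h2 : a2 t → a2 s := by
    rw [a2, a2, hc]; exact Or.imp (fun h => hr h) (And.imp_right h0)
  have h3 : a3 t → a3 s := by
    rw [a3, a3, hc]; exact Or.imp (fun h => hr h) (And.imp_right h1)
  have h4 : a4 t → a4 s := by
    rw [a4, a4, hc]; exact Or.imp (fun h => hr h) (And.imp_right h1)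
  have h5 : a5 t → a5 s := by
    rw [a5, a5, hc]; exact Or.imp (fun h => hr h) (And.imp_right (And.imp h3 h4))
  have h6 : a6 t → a6 s := by
    rw [a6, a6, hc]; exact Or.imp (fun h => hr h) (And.imp_right (And.imp h1 h5))
  constructor
  · rw [a7, a7, hc]; exact Or.imp (fun h => hr h) (And.imp_right (And.imp h2 h6))
  · rw [a8, a8, hc]; exact Or.imp (fun h => hr h) (And.imp_right (And.imp h2 h6))

lemma a_compute {s t : RBPState (Fin 10)} {v : Fin 10}
    (hv0 : v ≠ 0) (hvC : v ∉ s.computed) (hp : ∀ u, exG.E u v → u ∈ s.red)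
    (hr : t.red = insert v s.red) (hc : t.computed = insert v s.computed) :
    (a7 t → a7 s) ∧ (a8 t → a8 s) := by
  have hCmem : ∀ k : Fin 10, k ∉ insert v s.computed → k ∉ s.computed :=
    fun k h hx => h (Finset.mem_insert_of_mem hx)
  have h0 : a0 t → a0 s := by
    rw [a0, a0, hr]; intro h
    rcases Finset.mem_insert.1 h with h | h
    · exact absurd h.symm hv0
    · exact h
  have h1 : a1 t → a1 s := by
    rw [a1, a1, hr, hc]
    rintro (h | ⟨hC, hA⟩)
    · rcases Finset.mem_insert.1 h with rfl | h
      · exact Or.inr ⟨hvC, hp 0 (by decide)⟩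
      · exact Or.inl h
    · exact Or.inr ⟨hCmem _ hC, h0 hA⟩
  have h2 : a2 t → a2 s := by
    rw [a2, a2, hr, hc]
    rintro (h | ⟨hC, hA⟩)
    · rcases Finset.mem_insert.1 h with rfl | h
      · exact Or.inr ⟨hvC, hp 0 (by decide)⟩
      · exact Or.inl h
    · exact Or.inr ⟨hCmem _ hC, h0 hA⟩
  have h3 : a3 t → a3 s := by
    rw [a3, a3, hr, hc]
    rintro (h | ⟨hC, hA⟩)
    · rcases Finset.mem_insert.1 h with rfl | h
      · exact Or.inr ⟨hvC, Or.inl (hp 1 (by decide))⟩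
      · exact Or.inl h
    · exact Or.inr ⟨hCmem _ hC, h1 hA⟩
  have h4 : a4 t → a4 s := by
    rw [a4, a4, hr, hc]
    rintro (h | ⟨hC, hA⟩)
    · rcases Finset.mem_insert.1 h with rfl | h
      · exact Or.inr ⟨hvC, Or.inl (hp 1 (by decide))⟩
      · exact Or.inl h
    · exact Or.inr ⟨hCmem _ hC, h1 hA⟩
  have h5 : a5 t → a5 s := by
    rw [a5, a5, hr, hc]
    rintro (h | ⟨hC, hA⟩)
    · rcases Finset.mem_insert.1 h with rfl | h
      · exact Or.inr ⟨hvC, Or.inl (hp 3 (by decide)), Or.inl (hp 4 (by decide))⟩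
      · exact Or.inl h
    · exact Or.inr ⟨hCmem _ hC, h3 hA.1, h4 hA.2⟩
  have h6 : a6 t → a6 s := by
    rw [a6, a6, hr, hc]
    rintro (h | ⟨hC, hA⟩)
    · rcases Finset.mem_insert.1 h with rfl | h
      · exact Or.inr ⟨hvC, Or.inl (hp 1 (by decide)), Or.inl (hp 5 (by decide))⟩
      · exact Or.inl h
    · exact Or.inr ⟨hCmem _ hC, h1 hA.1, h5 hA.2⟩
  constructor
  · rw [a7, a7, hr, hc]
    rintro (h | ⟨hC, hA⟩)
    · rcases Finset.mem_insert.1 h with rfl | h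
      · exact Or.inr ⟨hvC, Or.inl (hp 2 (by decide)), Or.inl (hp 6 (by decide))⟩
      · exact Or.inl h
    · exact Or.inr ⟨hCmem _ hC, h2 hA.1, h6 hA.2⟩
  · rw [a8, a8, hr, hc]
    rintro (h | ⟨hC, hA⟩)
    · rcases Finset.mem_insert.1 h with rfl | h
      · exact Or.inr ⟨hvC, Or.inl (hp 2 (by decide)), Or.inl (hp 6 (by decide))⟩
      · exact Or.inl h
    · exact Or.inr ⟨hCmem _ hC, h2 hA.1, h6 hA.2⟩

lemma rinv_save {b : ℕ} {s t : RBPState (Fin 10)} {v : Fin 10}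
    (hI : RInv b s) (hst : RBPStep exG 4 s (.save v) t) : RInv b t := by
  obtain ⟨h9b, h9r, h9c, hRC, hCl, hb1, hP⟩ := hI
  obtain ⟨hv, rfl⟩ := hst
  refine ⟨?_, h9r, h9c, hRC, hCl, ?_, hP⟩
  · simp only [Finset.mem_insert]
    rintro (rfl | h); exacts [h9r hv, h9b h]
  · intro hb
    exact absurd hv (by rw [(hb1 hb).1]; exact Finset.notMem_empty v)

lemma rinv_delete {b : ℕ} {s t : RBPState (Fin 10)} {v : Fin 10}
    (hI : RInv b s) (hst : RBPStep exG 4 s (.delete v) t) : RInv b t := by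
  obtain ⟨h9b, h9r, h9c, hRC, hCl, hb1, hP⟩ := hI
  obtain ⟨hv, rfl⟩ := hst
  have hmono := a_mono (s := s) (t := { s with red := s.red.erase v })
    (Finset.erase_subset _ _) rfl
  refine ⟨h9b, fun h => h9r (Finset.mem_of_mem_erase h), h9c,
    fun x hx => hRC x (Finset.mem_of_mem_erase hx), hCl, ?_, ?_⟩
  · intro hb
    refine ⟨?_, (hb1 hb).2⟩
    rw [(hb1 hb).1]; exact Finset.erase_empty v
  · rintro h5 ⟨h7, h8⟩
    exact hP h5 ⟨hmono.1 h7, hmono.2 h8⟩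

lemma rinv_load {s t : RBPState (Fin 10)} {v : Fin 10}
    (hI : RInv 1 s) (hst : RBPStep exG 4 s (.load v) t) : RInv 0 t := by
  obtain ⟨h9b, h9r, h9c, hRC, hCl, hb1, hP⟩ := hI
  obtain ⟨hr0, hc0, hb0⟩ := hb1 rfl
  obtain ⟨hv, -, rfl⟩ := hst
  have hv0 : v = 0 := by rw [hb0] at hv; exact Finset.mem_singleton.1 hv
  subst hv0
  refine ⟨h9b, ?_, h9c, ?_, hCl, fun h => absurd h (by omega), ?_⟩
  · rw [hr0]
    simp
  · intro x hx
    rw [hr0] at hx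
    left; simpa using hx
  · rw [hc0]; intro h; exact absurd h (Finset.notMem_empty _)

lemma rbp_b1_block {s t : RBPState (Fin 10)} {m : RBPMove (Fin 10)}
    (hI : RInv 1 s) (hst : RBPStep exG 4 s m t) (hm : ∀ v : Fin 10, m ≠ RBPMove.load v) :
    False := by
  obtain ⟨-, -, -, -, -, hb1, -⟩ := hI
  obtain ⟨hr0, -, -⟩ := hb1 rfl
  cases m with
  | load v => exact hm v rfl
  | save v => exact absurd (hr0 ▸ hst.1) (Finset.notMem_empty v)
  | delete v => exact absurd (hr0 ▸ hst.1) (Finset.notMem_empty v)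
  | compute v =>
      obtain ⟨hns, -, hp, -, -⟩ := hst
      rw [DirGraph.IsSource] at hns
      push_neg at hns
      obtain ⟨u, hu⟩ := hns
      exact absurd (hr0 ▸ hp u hu) (Finset.notMem_empty u)

lemma rinv_compute {s t : RBPState (Fin 10)} {v : Fin 10}
    (hI : RInv 0 s) (hst : RBPStep exG 4 s (.compute v) t) : RInv 0 t := by
  obtain ⟨h9b, h9r, h9c, hRC, hCl, hb1, hP⟩ := hI
  obtain ⟨hns, hvC, hp, hcard, rfl⟩ := hst
  have hv0 : v ≠ 0 := by
    rintro rfl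
    exact hns (by decide)
  have hv9 : v ≠ 9 := by
    rintro rfl
    have h7 : 7 ∈ s.red := hp 7 (by decide)
    have h8 : 8 ∈ s.red := hp 8 (by decide)
    have h7c : (7 : Fin 10) ∈ s.computed := (hRC 7 h7).resolve_left (by decide)
    have h6c : (6 : Fin 10) ∈ s.computed :=
      (hCl 7 6 (by decide) h7c).resolve_left (by decide)
    have h5c : (5 : Fin 10) ∈ s.computed :=
      (hCl 6 5 (by decide) h6c).resolve_left (by decide)
    exact hP h5c ⟨Or.inl h7, Or.inl h8⟩
  refine ⟨h9b, ?_, ?_, ?_, ?_, fun h => absurd h (by omega), ?_⟩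
  · simp only [Finset.mem_insert]
    rintro (h | h); exacts [hv9 h.symm, h9r h]
  · simp only [Finset.mem_insert]
    rintro (h | h); exacts [hv9 h.symm, h9c h]
  · intro x hx
    rcases Finset.mem_insert.1 hx with rfl | hx
    · exact Or.inr (Finset.mem_insert_self _ _)
    · exact (hRC x hx).imp id Finset.mem_insert_of_mem
  · intro u w he hu
    rcases Finset.mem_insert.1 hu with rfl | hu
    · exact (hRC w (hp w he)).imp id Finset.mem_insert_of_mem
    · exact (hCl u w he hu).imp id Finset.mem_insert_of_mem
  · -- the key capacity clause
    by_cases hv5 : v = 5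
    · subst hv5
      rintro - ⟨h7, h8⟩
      have h3r : (3 : Fin 10) ∈ s.red := hp 3 (by decide)
      have h4r : (4 : Fin 10) ∈ s.red := hp 4 (by decide)
      have h5r : (5 : Fin 10) ∉ s.red := fun h =>
        hvC ((hRC 5 h).resolve_left (by decide))
      have hcard3 : s.red.card ≤ 3 := by
        rw [Finset.card_insert_of_notMem h5r] at hcard; omega
      have h3c : (3 : Fin 10) ∈ s.computed := (hRC 3 h3r).resolve_left (by decide)
      have h1c : (1 : Fin 10) ∈ s.computed :=
        (hCl 3 1 (by decide) h3c).resolve_left (by decide)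
      -- from a7: 1 ∈ s.red and (2 ∈ s.red ∨ 0 ∈ s.red)
      have h7r : (7 : Fin 10) ∉ s.red := fun h => by
        have h7c := (hRC 7 h).resolve_left (by decide)
        have h6c := (hCl 7 6 (by decide) h7c).resolve_left (by decide)
        exact hvC ((hCl 6 5 (by decide) h6c).resolve_left (by decide))
      have h6r : (6 : Fin 10) ∉ s.red := fun h => by
        have h6c := (hRC 6 h).resolve_left (by decide)
        exact hvC ((hCl 6 5 (by decide) h6c).resolve_left (by decide))
      rw [a7] at h7
      rcases h7 with h7 | ⟨-, ha2, ha6⟩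
      · rcases Finset.mem_insert.1 h7 with h | h
        · exact absurd h (by decide)
        · exact h7r h
      rw [a6] at ha6
      rcases ha6 with ha6 | ⟨-, ha1, -⟩
      · rcases Finset.mem_insert.1 ha6 with h | h
        · exact absurd h (by decide)
        · exact h6r h
      have h1r : (1 : Fin 10) ∈ s.red := by
        rw [a1] at ha1
        rcases ha1 with h | ⟨hc, -⟩
        · rcases Finset.mem_insert.1 h with h | h
          · exact absurd h (by decide)
          · exact h
        · exact absurd (Finset.mem_insert_of_mem h1c) hc
      have hsub : ({1, 3, 4} : Finset (Fin 10)) ⊆ s.red := by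
        refine Finset.insert_subset h1r (Finset.insert_subset h3r ?_)
        exact Finset.singleton_subset_iff.2 h4r
      have hred : ({1, 3, 4} : Finset (Fin 10)) = s.red :=
        Finset.eq_of_subset_of_card_le hsub (by simpa using hcard3)
      have h02 : (2 : Fin 10) ∈ s.red ∨ (0 : Fin 10) ∈ s.red := by
        rw [a2] at ha2
        rcases ha2 with h | ⟨-, h0⟩
        · rcases Finset.mem_insert.1 h with h | h
          · exact absurd h (by decide)
          · exact Or.inl h
        · rw [a0] at h0
          rcases Finset.mem_insert.1 h0 with h | h
          · exact absurd h (by decide)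
          · exact Or.inr h
      rw [← hred] at h02
      rcases h02 with h | h <;> exact absurd h (by decide)
    · intro h5
      have h5c : (5 : Fin 10) ∈ s.computed := by
        rcases Finset.mem_insert.1 h5 with h | h
        · exact absurd h.symm hv5
        · exact h
      have hmono := a_compute (s := s)
        (t := { s with red := insert v s.red, computed := insert v s.computed })
        hv0 hvC hp rfl rfl
      rintro ⟨h7, h8⟩
      exact hP h5c ⟨hmono.1 h7, hmono.2 h8⟩

lemma rinv_run {s t : RBPState (Fin 10)} {L : List (RBPMove (Fin 10))} {b : ℕ}
    (h : RBPReaches exG 4 s L t) (hI : RInv b s)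
    (hl : nloads L ≤ b) (hb : b ≤ 1) : 9 ∉ t.blue := by
  induction h generalizing b with
  | nil => exact hI.1
  | @cons s t u m L hstep htail ih =>
      cases m with
      | load v =>
          rw [nloads] at hl
          have hb1 : b = 1 := by omega
          subst hb1
          exact ih (rinv_load hI hstep) (by omega) (by omega)
      | save v =>
          exact ih (rinv_save hI hstep) (by simpa [nloads] using hl) hb
      | delete v =>
          exact ih (rinv_delete hI hstep) (by simpa [nloads] using hl) hb
      | compute v =>
          have hb0 : b = 0 ∨ b = 1 := by omega
          rcases hb0 with rfl | rfl
          · exact ih (rinv_compute hI hstep) (by simpa [nloads] using hl) hb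
          · exact absurd (rbp_b1_block hI hstep (fun _ h => by cases h)) id

lemma rbp_lower {L : List (RBPMove (Fin 10))} (h : RBPValid exG 4 L) :
    3 ≤ RBPCost L := by
  obtain ⟨t, hr, hsink⟩ := h
  rw [rbpInit_eq] at hr
  have h9 : (9 : Fin 10) ∈ t.blue := hsink 9 (by decide)
  have hs : nsaves L ≠ 0 := by
    intro h0
    rw [rbp_blue_stable hr h0] at h9
    simp at h9
  have hl : ¬ (nloads L ≤ 1) := by
    intro h0
    refine rinv_run hr ?_ h0 (le_refl 1) h9
    refine ⟨by decide, by decide, by decide, by decide, ?_, fun _ => ⟨rfl, rfl, rfl⟩, ?_⟩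
    · intro u w he hu
      exact absurd hu (Finset.notMem_empty u)
    · intro h
      exact absurd h (Finset.notMem_empty _)
  rw [rbp_cost_eq]
  omega


/-- On this DAG with `r = 4`, the optimal one-shot RBP cost is `3`
while the optimal PRBP cost is `2`. -/
theorem example_dag_costs :
    optRBP exG 4 = ((3 : ℕ) : ℕ∞) ∧ optPRBP exG 4 = ((2 : ℕ) : ℕ∞) := by
  constructor
  · apply le_antisymm
    · exact sInf_le ⟨rbpL, rbp_upper, by simp only []; rw [rbp_cost]⟩
    · refine le_sInf ?_
      rintro x ⟨L, hL, rfl⟩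
      simp only []
      exact_mod_cast rbp_lower hL
  · apply le_antisymm
    · exact sInf_le ⟨prbpL, prbp_upper, by simp only []; rw [prbp_cost]⟩
    · refine le_sInf ?_
      rintro x ⟨L, hL, rfl⟩
      simp only []
      exact_mod_cast prbp_lower hL
end

section
/- Consider the pebble collection gadget: d source nodes u_1, …, u_d and a chain v_1, …, v_ℓ where v_1 has an in-edge from u_1 and, for each 2 ≤ i ≤ ℓ, node v_i has in-edges from v_{i−1} and from u_{((i−1) mod d)+1}. If a valid PRBP pebbling strategy never has at least d+2 red pebbles simultaneously on the nodes of this gadget, then its I/O cost is at least ℓ/(2d). -/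
open scoped Classical

variable {V : Type} [Fintype V] [DecidableEq V]

/-- The pebble collection gadget: sources `u_0, …, u_{d-1}` (as `Sum.inl`) and a
chain `v_0, …, v_{ℓ-1}` (as `Sum.inr`), where `v_k` has in-edges from
`v_{k-1}` (for `k ≥ 1`) and from `u_{k mod d}`. -/
def CollG (d ℓ : ℕ) : DirGraph (Fin d ⊕ Fin ℓ) :=
  ⟨fun a b =>
    match a, b with
    | Sum.inl j, Sum.inr k => (j : ℕ) = (k : ℕ) % d
    | Sum.inr k, Sum.inr k' => (k : ℕ) + 1 = (k' : ℕ)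
    | _, _ => False⟩


/-!
Cut the chain into segments `v_a, …, v_{a+2d}` with `a = 2dt`. When the edge `v_a → v_{a+1}` is
marked, both of its endpoints are red, so fewer than `d + 2` red pebbles leave one of the `d`
disjoint pairs `(u_{q mod d}, v_q)`, `a + d < q ≤ a + 2d`, without red pebbles. The edge
`u_{q mod d} → v_q` is either marked later, and then the source `u_{q mod d}` has to be loaded
before `v_q → v_{q+1}` is marked, or it was marked earlier, and then the dark pebble on `v_q` was
removed in between; since the out-edge of `v_q` is still unmarked, that removal is a save. Either
way the segment pays for an I/O move that no other segment pays for; a segment containing the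
sink can use the save of the sink instead.
-/

theorem Nat.exists_between_not_and_succ {P : ℕ → Prop} {j k : ℕ} (hjk : j ≤ k) (hj : ¬ P j)
    (hk : P k) : ∃ i, j ≤ i ∧ i < k ∧ ¬ P i ∧ P (i + 1) := by
  induction k, hjk using Nat.le_induction with
  | base => exact absurd hk hj
  | succ k hjk ih =>
    by_cases hPk : P k
    · obtain ⟨i, hji, hik, hPi, hPi'⟩ := ih hPk
      exact ⟨i, hji, by omega, hPi, hPi'⟩
    · exact ⟨k, hjk, k.lt_succ_self, hPk, hk⟩

theorem exists_pair_notMem_of_card_lt {ι α : Type*} [Fintype ι] [DecidableEq α]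
    {s t : Finset α} {x y : ι → α} (hxy : Function.Injective (Sum.elim x y)) (hts : t ⊆ s)
    (hxt : ∀ i, x i ∉ t) (hyt : ∀ i, y i ∉ t) (hs : s.card < t.card + Fintype.card ι) :
    ∃ i, x i ∉ s ∧ y i ∉ s := by
  by_contra! h
  let pick : ι → ι ⊕ ι := fun i => if x i ∈ s then .inl i else .inr i
  have hpick : Function.Injective pick := by
    intro i j hij
    simp only [pick] at hij
    split_ifs at hij <;> simpa using hij
  have hmaps : ∀ i ∈ (Finset.univ : Finset ι), Sum.elim x y (pick i) ∈ s \ t := by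
    intro i _
    by_cases hi : x i ∈ s <;> simp [pick, hi, hxt, hyt, h]
  have := Finset.card_le_card_of_injOn _ hmaps (hxy.comp hpick).injOn
  rw [Finset.card_univ, Finset.card_sdiff_of_subset hts] at this
  have := Finset.card_le_card hts
  omega

theorem card_le_PRBPCost {V : Type} {L : List (PRBPMove V)} {s : Finset ℕ}
    (hs : ∀ j ∈ s, ∃ hj : j < L.length, L[j].ioCost = 1) : s.card ≤ PRBPCost L := by
  have hcost : PRBPCost L = ∑ j ∈ Finset.range L.length,
      if hj : j < L.length then L[j].ioCost else 0 := by
    rw [Finset.sum_range, PRBPCost, ← Fin.sum_univ_getElem]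
    refine Fintype.sum_equiv (finCongr (by simp)) _ _ fun i => ?_
    simp [(by simpa using i.2 : (i : ℕ) < L.length)]
  rw [hcost, Finset.card_eq_sum_ones]
  refine le_trans (Finset.sum_le_sum fun j hj => ?_) (Finset.sum_le_sum_of_subset ?_)
  · obtain ⟨hj', h⟩ := hs j hj
    simp [hj', h]
  · intro j hj
    simpa using (hs j hj).1

namespace PRBPStep

variable {V : Type} [DecidableEq V] {G : DirGraph V} {r : ℕ} {s t : PRBPState V}
  {m : PRBPMove V} {u v w : V}

theorem marked_subset (h : PRBPStep G r s m t) : s.marked ⊆ t.marked := by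
  cases m <;> simp only [PRBPStep] at h <;> aesop

theorem mem_marked (h : PRBPStep G r s m t) (hm : (u, v) ∈ t.marked) :
    (u, v) ∈ s.marked ∨ m = .pcompute u v := by
  cases m <;> simp only [PRBPStep] at h <;> aesop

theorem mem_red (h : PRBPStep G r s m t) (hv : v ∈ t.red) :
    v ∈ s.red ∨ m = .load v ∨ ∃ u, m = .pcompute u v := by
  cases m <;> simp only [PRBPStep] at h <;> aesop (add norm PRBPState.red)

theorem mem_blue (h : PRBPStep G r s m t) (hv : v ∈ t.blue) :
    v ∈ s.blue ∨ m = .save v := by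
  cases m <;> simp only [PRBPStep] at h <;> aesop

theorem save_or_delete_of_mem_dred (h : PRBPStep G r s m t) (hs : v ∈ s.dred)
    (ht : v ∉ t.dred) :
    m = .save v ∨ m = .delete v ∧ ∀ w, G.E v w → (v, w) ∈ s.marked := by
  cases m <;> simp only [PRBPStep] at h <;> aesop

theorem edge_of_pcompute (h : PRBPStep G r s (.pcompute u v) t) : G.E u v := h.1

theorem in_marked_of_pcompute (h : PRBPStep G r s (.pcompute u v) t) (hw : G.E w u) :
    (w, u) ∈ s.marked := h.2.2.1 w hw

theorem mem_red_of_pcompute (h : PRBPStep G r s (.pcompute u v) t) : u ∈ s.red := h.2.2.2.1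

theorem mem_red_succ_of_pcompute (h : PRBPStep G r s (.pcompute u v) t) (huv : u ≠ v) :
    u ∈ t.red := by
  obtain ⟨-, -, -, hu, -, -, rfl⟩ := h
  simp_all [PRBPState.red]

theorem mem_dred_of_pcompute (h : PRBPStep G r s (.pcompute u v) t) : v ∈ t.dred := by
  obtain ⟨-, -, -, -, -, -, rfl⟩ := h
  simp

end PRBPStep

theorem PRBPReaches.exists_trace {V : Type} [DecidableEq V] {G : DirGraph V} {r : ℕ}
    {s₀ s : PRBPState V} {L : List (PRBPMove V)} (h : PRBPReaches G r s₀ L s) :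
    ∃ f : ℕ → PRBPState V, f 0 = s₀ ∧ (∀ k, L.length ≤ k → f k = s) ∧
      (∀ k (hk : k < L.length), PRBPStep G r (f k) L[k] (f (k + 1))) ∧
      ∀ k, PRBPReaches G r s₀ (L.take k) (f k) := by
  induction h with
  | nil s => exact ⟨fun _ => s, rfl, fun _ _ => rfl, fun k hk => absurd hk (by simp),
      fun k => by simpa using PRBPReaches.nil s⟩
  | @cons s₀ t s m L hstep _ ih =>
    obtain ⟨f, hf₀, hf_end, hf_step, hf_reach⟩ := ih
    refine ⟨fun k => Nat.casesOn k s₀ f, rfl, ?_, ?_, ?_⟩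
    · rintro (_ | k) hk
      · simp at hk
      · exact hf_end k (by simpa using hk)
    · rintro (_ | k) hk
      · simpa [hf₀] using hstep
      · exact hf_step k (by simpa using hk)
    · rintro (_ | k)
      · exact PRBPReaches.nil s₀
      · exact PRBPReaches.cons hstep (hf_reach k)

structure PRBPRun (G : DirGraph V) (r : ℕ) (L : List (PRBPMove V)) where
  state : ℕ → PRBPState V
  state_zero : state 0 = PRBPInit G
  state_of_length_le : ∀ k, L.length ≤ k → state k = state L.length
  step : ∀ k (hk : k < L.length), PRBPStep G r (state k) L[k] (state (k + 1))
  prefixState : ∀ k, PRBPPrefixState G r L (state k)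
  mem_blue_of_isSink : ∀ v, G.IsSink v → v ∈ (state L.length).blue
  mem_marked_of_edge : ∀ u v, G.E u v → (u, v) ∈ (state L.length).marked

theorem PRBPValid.nonempty_run {G : DirGraph V} {r : ℕ} {L : List (PRBPMove V)}
    (h : PRBPValid G r L) : Nonempty (PRBPRun G r L) := by
  obtain ⟨s, hreach, hsink, hmarked⟩ := h
  obtain ⟨f, hf₀, hf_end, hf_step, hf_reach⟩ := hreach.exists_trace
  have hf_len : f L.length = s := hf_end _ le_rfl
  exact ⟨⟨f, hf₀, fun k hk => by rw [hf_end k hk, hf_len], hf_step,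
    fun k => ⟨L.take k, L.drop k, (L.take_append_drop k).symm, hf_reach k⟩,
    hf_len ▸ hsink, hf_len ▸ hmarked⟩⟩

namespace PRBPRun

variable {G : DirGraph V} {r : ℕ} {L : List (PRBPMove V)} (R : PRBPRun G r L)
  {u v w : V} {j k : ℕ}

theorem marked_mono : Monotone fun k => (R.state k).marked := by
  refine monotone_nat_of_le_succ fun k => ?_
  by_cases hk : k < L.length
  · exact (R.step k hk).marked_subset
  · rw [R.state_of_length_le k (by omega), R.state_of_length_le (k + 1) (by omega)]

theorem exists_step_between {P : PRBPState V → Prop} (hjk : j ≤ k) (hj : ¬ P (R.state j))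
    (hk : P (R.state k)) :
    ∃ i < L.length, j ≤ i ∧ i < k ∧ ¬ P (R.state i) ∧ P (R.state (i + 1)) := by
  obtain ⟨i, hji, hik, hPi, hPi'⟩ :=
    Nat.exists_between_not_and_succ (P := fun i => P (R.state i)) hjk hj hk
  refine ⟨i, ?_, hji, hik, hPi, hPi'⟩
  by_contra hi
  rw [R.state_of_length_le i (by omega), R.state_of_length_le (i + 1) (by omega)] at *
  exact hPi hPi'

noncomputable def markTime (huv : G.E u v) : ℕ :=
  Nat.find (⟨L.length, R.state_of_length_le (L.length + 1) (by omega) ▸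
    R.mem_marked_of_edge u v huv⟩ : ∃ k, (u, v) ∈ (R.state (k + 1)).marked)

theorem mem_marked_iff (huv : G.E u v) : (u, v) ∈ (R.state k).marked ↔ R.markTime huv < k := by
  constructor
  · intro h
    obtain ⟨k, rfl⟩ : ∃ k', k = k' + 1 := by
      refine Nat.exists_eq_succ_of_ne_zero fun hk => ?_
      simp [hk, R.state_zero, PRBPInit] at h
    exact Nat.lt_succ_of_le (Nat.find_min' _ h)
  · intro h
    exact R.marked_mono h (Nat.find_spec (p := fun k => (u, v) ∈ (R.state (k + 1)).marked) _)

theorem markTime_lt_length (huv : G.E u v) : R.markTime huv < L.length :=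
  (R.mem_marked_iff huv).mp (R.mem_marked_of_edge u v huv)

theorem getElem_markTime (huv : G.E u v) :
    L[R.markTime huv]'(R.markTime_lt_length huv) = .pcompute u v := by
  have hbefore := (R.mem_marked_iff huv (k := R.markTime huv)).not.mpr (lt_irrefl _)
  have hafter := (R.mem_marked_iff huv (k := R.markTime huv + 1)).mpr (Nat.lt_succ_self _)
  exact ((R.step _ _).mem_marked hafter).resolve_left hbefore

theorem step_markTime (huv : G.E u v) :
    PRBPStep G r (R.state (R.markTime huv)) (.pcompute u v) (R.state (R.markTime huv + 1)) :=
  R.getElem_markTime huv ▸ R.step _ (R.markTime_lt_length huv)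

theorem markTime_lt_markTime (hwu : G.E w u) (huv : G.E u v) :
    R.markTime hwu < R.markTime huv :=
  (R.mem_marked_iff hwu).mp ((R.step_markTime huv).in_marked_of_pcompute hwu)

theorem exists_load_of_isSource (hw : G.IsSource w) (hjk : j ≤ k) (hj : w ∉ (R.state j).red)
    (hk : w ∈ (R.state k).red) :
    ∃ i, ∃ hi : i < L.length, j ≤ i ∧ i < k ∧ L[i] = .load w := by
  obtain ⟨i, hi, hji, hik, hwi, hwi'⟩ := R.exists_step_between (P := (w ∈ ·.red)) hjk hj hk
  refine ⟨i, hi, hji, hik, ?_⟩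
  rcases (R.step i hi).mem_red hwi' with h | h | ⟨u, h⟩
  · exact absurd h hwi
  · exact h
  · exact absurd ((h ▸ R.step i hi).edge_of_pcompute) (hw u)

theorem exists_save_of_isSink (R : PRBPRun G r L) (hs : G.IsSink w) (hw : ¬ G.IsSource w) :
    ∃ i, ∃ hi : i < L.length, L[i] = .save w := by
  have h₀ : w ∉ (R.state 0).blue := by simpa [R.state_zero, PRBPInit] using hw
  obtain ⟨i, hi, -, -, hwi, hwi'⟩ :=
    R.exists_step_between (P := (w ∈ ·.blue)) (Nat.zero_le _) h₀ (R.mem_blue_of_isSink w hs)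
  exact ⟨i, hi, ((R.step i hi).mem_blue hwi').resolve_left hwi⟩

theorem exists_save_or_out_marked (hjk : j ≤ k) (hj : w ∈ (R.state j).dred)
    (hk : w ∉ (R.state k).dred) :
    ∃ i, ∃ hi : i < L.length, j ≤ i ∧ i < k ∧
      (L[i] = .save w ∨ ∀ x, G.E w x → (w, x) ∈ (R.state i).marked) := by
  obtain ⟨i, hi, hji, hik, hwi, hwi'⟩ :=
    R.exists_step_between (P := (w ∉ ·.dred)) hjk (not_not_intro hj) hk
  refine ⟨i, hi, hji, hik, ?_⟩
  rcases (R.step i hi).save_or_delete_of_mem_dred (not_not.mp hwi) hwi' with h | ⟨-, h⟩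
  exacts [.inl h, .inr h]

theorem exists_load_or_save_or_out_marked (hu : G.IsSource u) (huv : G.E u v)
    (hu' : u ∉ (R.state k).red) (hv' : v ∉ (R.state k).red) :
    (∃ i, ∃ hi : i < L.length, k ≤ i ∧ i < R.markTime huv ∧ L[i] = .load u) ∨
      ∃ i, ∃ hi : i < L.length, R.markTime huv < i ∧ i < k ∧
        (L[i] = .save v ∨ ∀ x, G.E v x → (v, x) ∈ (R.state i).marked) := by
  rcases le_or_gt k (R.markTime huv) with hkτ | hτk
  · exact .inl (R.exists_load_of_isSource hu hkτ hu' (R.step_markTime huv).mem_red_of_pcompute)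
  · obtain ⟨i, hi, hτi, hik, h⟩ := R.exists_save_or_out_marked (j := R.markTime huv + 1)
      (by omega) (R.step_markTime huv).mem_dred_of_pcompute
      (fun h => hv' (Finset.mem_union_right _ h))
    exact .inr ⟨i, hi, hτi, hik, h⟩

end PRBPRun

namespace CollG

variable {d ℓ : ℕ}

theorem edge_inl_inr (hd : 0 < d) {k : ℕ} (hk : k < ℓ) :
    (CollG d ℓ).E (.inl ⟨k % d, Nat.mod_lt k hd⟩) (.inr ⟨k, hk⟩) := rfl

theorem edge_inr_succ {k : ℕ} (hk : k + 1 < ℓ) :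
    (CollG d ℓ).E (.inr ⟨k, by omega⟩) (.inr ⟨k + 1, hk⟩) := rfl

theorem isSource_inl (j : Fin d) : (CollG d ℓ).IsSource (.inl j) := by
  rintro (_ | _) <;> exact id

theorem not_isSource_inr (hd : 0 < d) (k : Fin ℓ) : ¬ (CollG d ℓ).IsSource (.inr k) :=
  fun h => h _ (edge_inl_inr hd k.2)

theorem isSink_inr {k : ℕ} (hk : k + 1 = ℓ) : (CollG d ℓ).IsSink (.inr ⟨k, by omega⟩) := by
  rintro (_ | ⟨k', _⟩) h
  · exact h
  · simp only [CollG] at h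
    omega

end CollG

namespace PRBPRun

variable {d ℓ r : ℕ} {L : List (PRBPMove (Fin d ⊕ Fin ℓ))} (R : PRBPRun (CollG d ℓ) r L)
  {a b j : ℕ}

/-- The time at which the chain edge `v_k → v_{k+1}` is marked; `L.length` when `v_k` is the last
node of the chain, which keeps `chainTime` monotone. -/
noncomputable def chainTime (k : ℕ) : ℕ :=
  if hk : k + 1 < ℓ then R.markTime (CollG.edge_inr_succ hk) else L.length

theorem chainTime_of_lt {k : ℕ} (hk : k + 1 < ℓ) :
    R.chainTime k = R.markTime (CollG.edge_inr_succ hk) :=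
  dif_pos hk

theorem chainTime_monotone : Monotone R.chainTime := by
  refine monotone_nat_of_le_succ fun k => ?_
  unfold chainTime
  split_ifs with hk hk'
  · exact (R.markTime_lt_markTime (CollG.edge_inr_succ hk) (CollG.edge_inr_succ hk')).le
  · exact (R.markTime_lt_length _).le
  · omega
  · exact le_rfl

theorem chainTime_lt_of_mem_marked {k i : ℕ} (hk : k + 1 < ℓ)
    (h : (.inr ⟨k, by omega⟩, .inr ⟨k + 1, hk⟩) ∈ (R.state i).marked) : R.chainTime k < i := by
  rw [R.chainTime_of_lt hk]
  exact (R.mem_marked_iff _).mp h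

theorem markTime_lt_chainTime (hd : 0 < d) {k : ℕ} (hk : k < ℓ) :
    R.markTime (CollG.edge_inl_inr hd hk) < R.chainTime k := by
  unfold chainTime
  split_ifs with hk'
  · exact R.markTime_lt_markTime _ (CollG.edge_inr_succ hk')
  · exact R.markTime_lt_length _

def IsCharge (a b j : ℕ) : Prop :=
  ∃ hj : j < L.length,
    ((∃ w, L[j] = .load w) ∧ R.chainTime a < j ∧ j < R.chainTime b) ∨
      ∃ q, ∃ hq : q < ℓ, a < q ∧ q ≤ b ∧ L[j] = .save (.inr ⟨q, hq⟩)

theorem IsCharge.ioCost_eq_one {R : PRBPRun (CollG d ℓ) r L} (h : R.IsCharge a b j) :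
    ∃ hj : j < L.length, L[j].ioCost = 1 := by
  obtain ⟨hj, ⟨⟨w, hw⟩, -⟩ | ⟨q, hq, -, -, hq'⟩⟩ := h <;> exact ⟨hj, by simp [*, PRBPMove.ioCost]⟩

theorem IsCharge.not_of_le {R : PRBPRun (CollG d ℓ) r L} {a' b' : ℕ} (hba' : b ≤ a')
    (h : R.IsCharge a b j) : ¬ R.IsCharge a' b' j := by
  rintro ⟨hj', h'⟩
  obtain ⟨hj, ⟨⟨w, hw⟩, -, hjb⟩ | ⟨q, hq, -, hqb, hsave⟩⟩ := h <;>
    obtain ⟨⟨w', hw'⟩, ha'j, -⟩ | ⟨q', hq', ha'q', -, hsave'⟩ := h'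
  · exact absurd (R.chainTime_monotone hba') (by omega)
  · cases hw.symm.trans hsave'
  · cases hsave.symm.trans hw'
  · have := hsave.symm.trans hsave'
    simp only [PRBPMove.save.injEq, Sum.inr.injEq, Fin.mk.injEq] at this
    omega

/-- Both endpoints of `v_a → v_{a+1}` are red right after it is marked, which leaves fewer than
`d` red pebbles for the `d` disjoint pairs `(u_{q mod d}, v_q)`. -/
theorem exists_notMem_red_pair (hd : 0 < d) (ha : a + 2 * d < ℓ)
    (hfew : (R.state (R.chainTime a + 1)).red.card < d + 2) :
    ∃ q, ∃ hq : q < ℓ, a + d < q ∧ q ≤ a + 2 * d ∧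
      (.inl ⟨q % d, Nat.mod_lt q hd⟩ : Fin d ⊕ Fin ℓ) ∉ (R.state (R.chainTime a + 1)).red ∧
      .inr ⟨q, hq⟩ ∉ (R.state (R.chainTime a + 1)).red := by
  have ha₁ : a + 1 < ℓ := by omega
  have hkey := R.step_markTime (CollG.edge_inr_succ (d := d) ha₁)
  rw [← R.chainTime_of_lt] at hkey
  have hx : Function.Injective fun i : Fin d =>
      (.inl ⟨(a + d + 1 + i) % d, Nat.mod_lt _ hd⟩ : Fin d ⊕ Fin ℓ) := by
    intro i j hij
    have := Nat.mod_injOn_Ico (a + d + 1) d (x₁ := a + d + 1 + i) (x₂ := a + d + 1 + j)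
      (by simp) (by simp) (by simpa using hij)
    exact Fin.ext (by simpa using this)
  have hy : Function.Injective fun i : Fin d =>
      (.inr ⟨a + d + 1 + i, by omega⟩ : Fin d ⊕ Fin ℓ) := by
    intro i j hij
    exact Fin.ext (by simpa using hij)
  obtain ⟨i, hu, hv⟩ := exists_pair_notMem_of_card_lt
    (s := (R.state (R.chainTime a + 1)).red)
    (t := {.inr ⟨a, Nat.lt_of_succ_lt ha₁⟩, .inr ⟨a + 1, ha₁⟩})
    (hx.sumElim hy fun _ _ => Sum.inl_ne_inr)
    (Finset.insert_subset (hkey.mem_red_succ_of_pcompute (by simp))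
      (Finset.singleton_subset_iff.mpr (Finset.mem_union_right _ hkey.mem_dred_of_pcompute)))
    (by simp) (fun i => by simp; omega)
    (by rw [Finset.card_pair (by simp), Fintype.card_fin]; omega)
  exact ⟨a + d + 1 + i, by omega, by omega, by omega, hu, hv⟩

theorem exists_isCharge (hd : 0 < d) (ha : a + 1 < ℓ)
    (hfew : ∀ k, (R.state k).red.card < d + 2) : ∃ j, R.IsCharge a (a + 2 * d) j := by
  by_cases hsink : ℓ ≤ a + 2 * d + 1
  · obtain ⟨j, hj, hsave⟩ := R.exists_save_of_isSink (CollG.isSink_inr (k := ℓ - 1) (by omega))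
      (CollG.not_isSource_inr hd _)
    exact ⟨j, hj, .inr ⟨ℓ - 1, by omega, by omega, by omega, hsave⟩⟩
  obtain ⟨q, hq, haq, hqb, hu, hv⟩ := R.exists_notMem_red_pair (a := a) hd (by omega) (hfew _)
  have huv := CollG.edge_inl_inr hd hq
  rcases R.exists_load_or_save_or_out_marked (CollG.isSource_inl _) huv hu hv with
    ⟨j, hj, haj, hjτ, hload⟩ | ⟨j, hj, -, hja, hsave | hout⟩
  · have := R.markTime_lt_chainTime hd hq
    have := R.chainTime_monotone hqb
    exact ⟨j, hj, .inl ⟨⟨_, hload⟩, by omega, by omega⟩⟩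
  · exact ⟨j, hj, .inr ⟨q, hq, by omega, hqb, hsave⟩⟩
  · -- `v_q` lost its dark pebble before `v_a → v_{a+1}` was marked, its out-edge only after
    have := R.chainTime_lt_of_mem_marked (by omega) (hout _ (CollG.edge_inr_succ (by omega)))
    have := R.chainTime_monotone (show a ≤ q by omega)
    omega

end PRBPRun

/-- if a valid PRBP pebbling never has at least `d + 2` red pebbles
simultaneously on the gadget, then its I/O cost is at least `ℓ / (2d)`. -/
theorem collection_gadget_cost (d ℓ r : ℕ) (hd : 1 ≤ d)
    (L : List (PRBPMove (Fin d ⊕ Fin ℓ))) (hL : PRBPValid (CollG d ℓ) r L)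
    (hfew : ∀ s, PRBPPrefixState (CollG d ℓ) r L s → s.red.card < d + 2) :
    ℓ / (2 * d) ≤ PRBPCost L := by
  obtain ⟨R⟩ := hL.nonempty_run
  have hseg : ∀ t < ℓ / (2 * d), ∃ j, R.IsCharge (2 * d * t) (2 * d * t + 2 * d) j := by
    intro t ht
    have := (Nat.le_div_iff_mul_le (by omega)).mp ht
    exact R.exists_isCharge hd (by nlinarith) fun k => hfew _ (R.prefixState k)
  choose! c hc using hseg
  have hinj : Set.InjOn c (Finset.range (ℓ / (2 * d))) := by
    intro t ht t' ht' htt'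
    simp only [Finset.coe_range, Set.mem_Iio] at ht ht'
    by_contra hne
    rcases Nat.lt_or_gt_of_ne hne with h | h
    · exact (hc t ht).not_of_le (by nlinarith) (htt' ▸ hc t' ht')
    · exact (hc t' ht').not_of_le (by nlinarith) (htt' ▸ hc t ht)
  calc ℓ / (2 * d) = ((Finset.range (ℓ / (2 * d))).image c).card := by
        rw [Finset.card_image_of_injOn hinj, Finset.card_range]
    _ ≤ PRBPCost L := card_le_PRBPCost (by simpa using fun t ht => (hc t ht).ioCost_eq_one)
end
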